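/- arXiv:2007.08014 — 9 statements merged into one kernel-verified Lean document; each statement's English description precedes it below -/
import Mathlib

section
/- Let f : [0,1) → [0,1) be a piecewise increasing λ-contraction with finite singular set. Then the singular entropy of f equals zero: limsup_{n→∞} (1/n) log #𝓘_n = 0, where 𝓘_n is the set of all itineraries of order n realized by points of [0,1). -/
open Set Filter Function

namespace PCAux

variable {f : ℝ → ℝ} {S : Set ℝ} {lam : ℝ}

/-- The address of `z`: the largest singular point `≤ z`. -/
noncomputable def sg (S : Set ℝ) (z : ℝ) : ℝ := sSup {s | s ∈ S ∧ s ≤ z}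

lemma orbit_mem (hmap : Set.MapsTo f (Set.Ico 0 1) (Set.Ico 0 1))
    {x : ℝ} (hx : x ∈ Set.Ico (0:ℝ) 1) (j : ℕ) : f^[j] x ∈ Set.Ico (0:ℝ) 1 := by
  induction j with
  | zero => simpa using hx
  | succ n ih => rw [Function.iterate_succ_apply']; exact hmap ih

lemma sg_set_fin (hSfin : S.Finite) (z : ℝ) : {s | s ∈ S ∧ s ≤ z}.Finite :=
  hSfin.subset fun s hs => hs.1

lemma sg_mem_le (hSfin : S.Finite) (hS0 : (0:ℝ) ∈ S) {z : ℝ} (hz : 0 ≤ z) :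
    sg S z ∈ S ∧ sg S z ≤ z := by
  have hne : {s | s ∈ S ∧ s ≤ z}.Nonempty := ⟨0, hS0, hz⟩
  have h := hne.csSup_mem (sg_set_fin hSfin z)
  exact ⟨h.1, h.2⟩

lemma sg_mono (hSfin : S.Finite) (hS0 : (0:ℝ) ∈ S) {z₁ z₂ : ℝ} (h0 : 0 ≤ z₁) (h : z₁ ≤ z₂) :
    sg S z₁ ≤ sg S z₂ :=
  csSup_le_csSup (sg_set_fin hSfin z₂).bddAbove (⟨0, hS0, h0⟩ : {s | s ∈ S ∧ s ≤ z₁}.Nonempty)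
    (fun s hs => ⟨hs.1, hs.2.trans h⟩)

lemma sg_gap (hSfin : S.Finite) (hS0 : (0:ℝ) ∈ S) {z₁ z₂ : ℝ} (h0 : 0 ≤ z₁)
    (he : sg S z₁ = sg S z₂) : ∀ s ∈ S, s ∉ Set.Ioc z₁ z₂ := by
  rintro s hs ⟨h1, h2⟩
  have hle : s ≤ sg S z₂ := le_csSup (sg_set_fin hSfin z₂).bddAbove ⟨hs, h2⟩
  have : s ≤ z₁ := by
    calc s ≤ sg S z₂ := hle
    _ = sg S z₁ := he.symm
    _ ≤ z₁ := (sg_mem_le hSfin hS0 h0).2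
  exact absurd h1 (not_lt.mpr this)

lemma sg_eq_of_gap {z₁ z₂ : ℝ} (h : z₁ ≤ z₂) (hgap : ∀ s ∈ S, s ∉ Set.Ioc z₁ z₂) :
    sg S z₂ = sg S z₁ := by
  unfold sg
  congr 1
  ext s
  constructor
  · rintro ⟨hs, h2⟩
    refine ⟨hs, ?_⟩
    by_contra hlt
    exact hgap s hs ⟨not_le.mp hlt, h2⟩
  · rintro ⟨hs, h1⟩
    exact ⟨hs, h1.trans h⟩

section Main
variable (hlam0 : 0 < lam) (hlam1 : lam < 1)
variable (hSfin : S.Finite) (hS0 : (0:ℝ) ∈ S)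
variable (hmap : Set.MapsTo f (Set.Ico 0 1) (Set.Ico 0 1))
variable (hpiece : ∀ x ∈ Set.Ico (0:ℝ) 1, ∀ y ∈ Set.Ico (0:ℝ) 1, x < y →
      (∀ s ∈ S, s ∉ Set.Ioc x y) → f x < f y ∧ f y - f x ≤ lam * (y - x))

include hSfin hS0 hpiece in
lemma step_mono {a b : ℝ} (ha : a ∈ Set.Ico (0:ℝ) 1) (hb : b ∈ Set.Ico (0:ℝ) 1)
    (hab : a ≤ b) (hsg : sg S a = sg S b) : f a ≤ f b := by
  rcases eq_or_lt_of_le hab with heq | hlt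
  · rw [heq]
  · exact (hpiece a ha b hb hlt (sg_gap hSfin hS0 ha.1 hsg)).1.le

include hlam0 hSfin hS0 hmap hpiece in
lemma lip {x y : ℝ} (hx : x ∈ Set.Ico (0:ℝ) 1) (hy : y ∈ Set.Ico (0:ℝ) 1) (hxy : x ≤ y)
    {n : ℕ} (hsg : ∀ j, j < n → sg S (f^[j] x) = sg S (f^[j] y)) :
    ∀ j, j ≤ n → f^[j] x ≤ f^[j] y ∧ f^[j] y - f^[j] x ≤ lam ^ j * (y - x) := by
  intro j
  induction j with
  | zero =>
    intro _
    simp only [Function.iterate_zero_apply, pow_zero, one_mul]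
    exact ⟨hxy, le_refl _⟩
  | succ j ih =>
    intro hj
    obtain ⟨h1, h2⟩ := ih (Nat.le_of_succ_le hj)
    have hxj := orbit_mem hmap hx j
    have hyj := orbit_mem hmap hy j
    rcases eq_or_lt_of_le h1 with heq | hlt
    · rw [Function.iterate_succ_apply', Function.iterate_succ_apply', heq]
      have hge : (0:ℝ) ≤ lam ^ (j+1) * (y - x) :=
        mul_nonneg (pow_nonneg hlam0.le _) (sub_nonneg.mpr hxy)
      exact ⟨le_refl _, by linarith⟩
    · have hgap := sg_gap hSfin hS0 hxj.1 (hsg j (Nat.lt_of_succ_le hj))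
      obtain ⟨hm1, hm2⟩ := hpiece _ hxj _ hyj hlt hgap
      rw [Function.iterate_succ_apply', Function.iterate_succ_apply']
      refine ⟨hm1.le, ?_⟩
      have hmul : lam * (f^[j] y - f^[j] x) ≤ lam * (lam ^ j * (y - x)) :=
        mul_le_mul_of_nonneg_left h2 hlam0.le
      calc f (f^[j] y) - f (f^[j] x) ≤ lam * (f^[j] y - f^[j] x) := hm2
        _ ≤ lam * (lam ^ j * (y - x)) := hmul
        _ = lam ^ (j+1) * (y - x) := by ring

include hSfin hS0 hmap hpiece in
lemma atom_convex {x y z : ℝ} (hx : x ∈ Set.Ico (0:ℝ) 1) (hy : y ∈ Set.Ico (0:ℝ) 1)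
    (hz : z ∈ Set.Ico (0:ℝ) 1) (hxy : x ≤ y) (hyz : y ≤ z)
    {m : ℕ} (hxz : ∀ j, j < m → sg S (f^[j] x) = sg S (f^[j] z)) :
    ∀ j, j < m → sg S (f^[j] y) = sg S (f^[j] x) := by
  have key : ∀ j, j ≤ m → f^[j] x ≤ f^[j] y ∧ f^[j] y ≤ f^[j] z := by
    intro j
    induction j with
    | zero =>
      intro _
      simpa using ⟨hxy, hyz⟩
    | succ j ih =>
      intro hj
      obtain ⟨h1, h2⟩ := ih (Nat.le_of_succ_le hj)
      have hjm : j < m := Nat.lt_of_succ_le hj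
      have hxj := orbit_mem hmap hx j
      have hyj := orbit_mem hmap hy j
      have hzj := orbit_mem hmap hz j
      have e1 : sg S (f^[j] x) = sg S (f^[j] y) :=
        le_antisymm (sg_mono hSfin hS0 hxj.1 h1)
          (by rw [hxz j hjm]; exact sg_mono hSfin hS0 hyj.1 h2)
      have e2 : sg S (f^[j] y) = sg S (f^[j] z) := e1.symm.trans (hxz j hjm)
      constructor
      · rw [Function.iterate_succ_apply', Function.iterate_succ_apply']
        exact step_mono hSfin hS0 hpiece hxj hyj h1 e1
      · rw [Function.iterate_succ_apply', Function.iterate_succ_apply']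
        exact step_mono hSfin hS0 hpiece hyj hzj h2 e2
  intro j hj
  obtain ⟨h1, h2⟩ := key j (le_of_lt hj)
  have hxj := orbit_mem hmap hx j
  have hyj := orbit_mem hmap hy j
  refine le_antisymm ?_ (sg_mono hSfin hS0 hxj.1 h1)
  rw [hxz j hj]
  exact sg_mono hSfin hS0 hyj.1 h2

lemma gap_eps (hSfin : S.Finite) (z : ℝ) : ∃ ε > 0, ∀ s ∈ S, s ∉ Set.Ioc z (z + ε) := by
  by_cases hT : (S ∩ Set.Ioi z).Nonempty
  · have hTfin : (S ∩ Set.Ioi z).Finite := hSfin.inter_of_left _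
    have hmem := hT.csInf_mem hTfin
    set t := sInf (S ∩ Set.Ioi z) with ht
    have htz : z < t := hmem.2
    refine ⟨(t - z)/2, by linarith, ?_⟩
    rintro s hs ⟨h1, h2⟩
    have hts : t ≤ s := csInf_le hTfin.bddBelow ⟨hs, h1⟩
    linarith
  · exact ⟨1, one_pos, fun s hs h => hT ⟨s, hs, h.1⟩⟩

include hlam0 hlam1 hSfin hS0 hmap hpiece in
lemma right_stab {a : ℝ} (ha : a ∈ Set.Ico (0:ℝ) 1) (m : ℕ) :
    ∃ ε > 0, ∀ y ∈ Set.Ico (0:ℝ) 1, a ≤ y → y - a ≤ ε →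
      (∀ j, j < m → sg S (f^[j] y) = sg S (f^[j] a)) ∧
      (∀ j, j ≤ m → f^[j] a ≤ f^[j] y ∧ f^[j] y - f^[j] a ≤ y - a) := by
  induction m with
  | zero =>
    refine ⟨1, one_pos, fun y hy hay hya => ⟨fun j hj => absurd hj (Nat.not_lt_zero j), ?_⟩⟩
    intro j hj
    have : j = 0 := Nat.le_zero.mp hj
    subst this
    simp only [Function.iterate_zero_apply]
    exact ⟨hay, le_refl _⟩
  | succ m ih =>
    obtain ⟨ε, hε, H⟩ := ih
    obtain ⟨ε', hε', H'⟩ := gap_eps hSfin (f^[m] a)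
    refine ⟨min ε ε', lt_min hε hε', ?_⟩
    intro y hy hay hya
    have hyε : y - a ≤ ε := hya.trans (min_le_left _ _)
    obtain ⟨Hsg, Hlip⟩ := H y hy hay hyε
    have hma := orbit_mem hmap ha m
    have hmy := orbit_mem hmap hy m
    obtain ⟨hm1, hm2⟩ := Hlip m (le_refl m)
    have hgap2 : ∀ s ∈ S, s ∉ Set.Ioc (f^[m] a) (f^[m] y) := by
      rintro s hs ⟨u1, u2⟩
      have hyaε' : y - a ≤ ε' := hya.trans (min_le_right _ _)
      exact H' s hs ⟨u1, u2.trans (by linarith)⟩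
    have hsgm : sg S (f^[m] y) = sg S (f^[m] a) := sg_eq_of_gap hm1 hgap2
    refine ⟨?_, ?_⟩
    · intro j hj
      rcases Nat.lt_succ_iff_lt_or_eq.mp hj with h | h
      · exact Hsg j h
      · rw [h]; exact hsgm
    · intro j hj
      rcases eq_or_lt_of_le hj with h | h
      · subst h
        rw [Function.iterate_succ_apply', Function.iterate_succ_apply']
        rcases eq_or_lt_of_le hm1 with heq | hlt
        · rw [heq]
          exact ⟨le_refl _, by linarith⟩
        · obtain ⟨p1, p2⟩ := hpiece _ hma _ hmy hlt hgap2
          refine ⟨p1.le, ?_⟩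
          have hmul : lam * (f^[m] y - f^[m] a) ≤ 1 * (y - a) :=
            mul_le_mul hlam1.le hm2 (by linarith) zero_le_one
          linarith
      · exact Hlip j (Nat.lt_succ_iff.mp h)

end Main

/-- Itinerary of order `m`. -/
noncomputable def itin (f : ℝ → ℝ) (S : Set ℝ) (m : ℕ) : ℝ → Fin m → ℝ :=
  fun x j => sSup {s | s ∈ S ∧ s ≤ f^[(j:ℕ)] x}

lemma itin_apply (f : ℝ → ℝ) (S : Set ℝ) (m : ℕ) (x : ℝ) (j : Fin m) :
    itin f S m x j = sg S (f^[(j:ℕ)] x) := rfl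

/-- The infimum of the atom of itinerary `v`. -/
noncomputable def atomInf (f : ℝ → ℝ) (S : Set ℝ) (m : ℕ) (v : Fin m → ℝ) : ℝ :=
  sInf {y | y ∈ Set.Ico (0:ℝ) 1 ∧ itin f S m y = v}

section Main2
variable (hlam0 : 0 < lam) (hlam1 : lam < 1)
variable (hSfin : S.Finite) (hS0 : (0:ℝ) ∈ S)
variable (hmap : Set.MapsTo f (Set.Ico 0 1) (Set.Ico 0 1))
variable (hpiece : ∀ x ∈ Set.Ico (0:ℝ) 1, ∀ y ∈ Set.Ico (0:ℝ) 1, x < y →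
      (∀ s ∈ S, s ∉ Set.Ioc x y) → f x < f y ∧ f y - f x ≤ lam * (y - x))

include hlam0 hlam1 hSfin hS0 hmap hpiece in
lemma atomInf_mem {m : ℕ} {x : ℝ} (hx : x ∈ Set.Ico (0:ℝ) 1) :
    atomInf f S m (itin f S m x) ∈ Set.Ico (0:ℝ) 1 ∧
    itin f S m (atomInf f S m (itin f S m x)) = itin f S m x ∧
    atomInf f S m (itin f S m x) ≤ x := by
  set A := {y | y ∈ Set.Ico (0:ℝ) 1 ∧ itin f S m y = itin f S m x} with hA
  have hxA : x ∈ A := ⟨hx, rfl⟩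
  have hbdd : BddBelow A := ⟨0, fun y hy => hy.1.1⟩
  have hne : A.Nonempty := ⟨x, hxA⟩
  have hax : sInf A ≤ x := csInf_le hbdd hxA
  have ha0 : (0:ℝ) ≤ sInf A := le_csInf hne (fun y hy => hy.1.1)
  have haI : sInf A ∈ Set.Ico (0:ℝ) 1 := ⟨ha0, lt_of_le_of_lt hax hx.2⟩
  obtain ⟨ε, hε, H⟩ := right_stab hlam0 hlam1 hSfin hS0 hmap hpiece haI m
  obtain ⟨y, hyA, hyε⟩ := (csInf_lt_iff hbdd hne).mp (by linarith : sInf A < sInf A + ε)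
  have hay : sInf A ≤ y := csInf_le hbdd hyA
  obtain ⟨Hsg, -⟩ := H y hyA.1 hay (by linarith)
  have hitin : itin f S m (sInf A) = itin f S m x := by
    rw [← hyA.2]
    funext j
    rw [itin_apply, itin_apply]
    exact (Hsg (j:ℕ) j.2).symm
  exact ⟨haI, hitin, hax⟩

lemma exists_sep {C : Set ℝ} (hC : C.Finite) :
    ∃ δ > 0, ∀ a ∈ C, ∀ b ∈ C, a ≠ b → δ ≤ |a - b| := by
  set D := {d : ℝ | ∃ a ∈ C, ∃ b ∈ C, a ≠ b ∧ d = |a - b|} with hD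
  have hDfin : D.Finite := by
    apply Set.Finite.subset ((hC.prod hC).image (fun p => |p.1 - p.2|))
    rintro d ⟨a, ha, b, hb, hab, rfl⟩
    exact ⟨(a, b), ⟨ha, hb⟩, rfl⟩
  by_cases hne : D.Nonempty
  · refine ⟨sInf D, ?_, ?_⟩
    · obtain ⟨a, ha, b, hb, hab, hd⟩ := hne.csInf_mem hDfin
      rw [hd]
      exact abs_pos.mpr (sub_ne_zero.mpr hab)
    · intro a ha b hb hab
      exact csInf_le hDfin.bddBelow ⟨a, ha, b, hb, hab, rfl⟩
  · exact ⟨1, one_pos, fun a ha b hb hab => (hne ⟨|a - b|, a, ha, b, hb, hab, rfl⟩).elim⟩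

include hlam0 hlam1 hSfin hS0 hmap hpiece in
lemma core {n m : ℕ} {δ : ℝ}
    (hδ : ∀ a ∈ atomInf f S m '' (itin f S m '' Set.Ico (0:ℝ) 1),
          ∀ b ∈ atomInf f S m '' (itin f S m '' Set.Ico (0:ℝ) 1), a ≠ b → δ ≤ |a - b|)
    (hld : lam ^ n < δ)
    {x y z : ℝ} (hx : x ∈ Set.Ico (0:ℝ) 1) (hy : y ∈ Set.Ico (0:ℝ) 1)
    (hz : z ∈ Set.Ico (0:ℝ) 1) (hxy : x ≤ y) (hxz : x ≤ z)
    (exy : itin f S n x = itin f S n y) (exz : itin f S n x = itin f S n z)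
    (txy : itin f S m (f^[n] x) ≠ itin f S m (f^[n] y))
    (txz : itin f S m (f^[n] x) ≠ itin f S m (f^[n] z))
    (tyz : itin f S m (f^[n] y) ≠ itin f S m (f^[n] z)) : False := by
  have hxn := orbit_mem hmap hx n
  have hyn := orbit_mem hmap hy n
  have hzn := orbit_mem hmap hz n
  set ay := atomInf f S m (itin f S m (f^[n] y)) with hay
  set az := atomInf f S m (itin f S m (f^[n] z)) with haz
  obtain ⟨hayI, hayit, hayle⟩ := atomInf_mem hlam0 hlam1 hSfin hS0 hmap hpiece (m := m) hyn
  obtain ⟨hazI, hazit, hazle⟩ := atomInf_mem hlam0 hlam1 hSfin hS0 hmap hpiece (m := m) hzn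
  -- Lipschitz bounds along the common prefix
  have hsgy : ∀ j, j < n → sg S (f^[j] x) = sg S (f^[j] y) := by
    intro j hj
    have := congrFun exy ⟨j, hj⟩
    rwa [itin_apply, itin_apply] at this
  have hsgz : ∀ j, j < n → sg S (f^[j] x) = sg S (f^[j] z) := by
    intro j hj
    have := congrFun exz ⟨j, hj⟩
    rwa [itin_apply, itin_apply] at this
  obtain ⟨hy1, hy2⟩ := lip hlam0 hSfin hS0 hmap hpiece hx hy hxy hsgy n (le_refl n)
  obtain ⟨hz1, hz2⟩ := lip hlam0 hSfin hS0 hmap hpiece hx hz hxz hsgz n (le_refl n)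
  -- lower bounds on the atom infima
  have hconv : ∀ {w : ℝ}, w ∈ Set.Ico (0:ℝ) 1 → f^[n] x ≤ f^[n] w →
      atomInf f S m (itin f S m (f^[n] w)) < f^[n] x →
      itin f S m (atomInf f S m (itin f S m (f^[n] w))) = itin f S m (f^[n] w) →
      atomInf f S m (itin f S m (f^[n] w)) ∈ Set.Ico (0:ℝ) 1 →
      itin f S m (f^[n] x) = itin f S m (f^[n] w) := by
    intro w hw hle hlt hit hI
    have hsg' : ∀ j, j < m → sg S (f^[j] (atomInf f S m (itin f S m (f^[n] w)))) =
        sg S (f^[j] (f^[n] w)) := by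
      intro j hj
      have := congrFun hit ⟨j, hj⟩
      rwa [itin_apply, itin_apply] at this
    have hmid := atom_convex hSfin hS0 hmap hpiece hI hxn (orbit_mem hmap hw n)
      hlt.le hle hsg'
    funext j
    rw [itin_apply, itin_apply]
    rw [hmid (j:ℕ) j.2]
    have := congrFun hit j
    rw [itin_apply, itin_apply] at this
    exact this
  have hayx : f^[n] x ≤ ay := by
    by_contra h
    push_neg at h
    exact txy (hconv hy hy1 h hayit hayI)
  have hazx : f^[n] x ≤ az := by
    by_contra h
    push_neg at h
    exact txz (hconv hz hz1 h hazit hazI)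
  -- upper bounds
  have hyx1 : y - x ≤ 1 := by
    have := hy.2; have := hx.1; linarith
  have hzx1 : z - x ≤ 1 := by
    have := hz.2; have := hx.1; linarith
  have haylt : ay ≤ f^[n] x + lam ^ n := by
    have h1 : lam ^ n * (y - x) ≤ lam ^ n * 1 :=
      mul_le_mul_of_nonneg_left hyx1 (pow_nonneg hlam0.le _)
    have := hayle
    nlinarith [hy2]
  have hazlt : az ≤ f^[n] x + lam ^ n := by
    have h1 : lam ^ n * (z - x) ≤ lam ^ n * 1 :=
      mul_le_mul_of_nonneg_left hzx1 (pow_nonneg hlam0.le _)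
    nlinarith [hz2, hazle]
  -- distinctness
  have hane : ay ≠ az := by
    intro h
    apply tyz
    rw [← hayit, ← hazit]
    exact congrArg (itin f S m) h
  have hayC : ay ∈ atomInf f S m '' (itin f S m '' Set.Ico (0:ℝ) 1) :=
    ⟨itin f S m (f^[n] y), ⟨f^[n] y, hyn, rfl⟩, rfl⟩
  have hazC : az ∈ atomInf f S m '' (itin f S m '' Set.Ico (0:ℝ) 1) :=
    ⟨itin f S m (f^[n] z), ⟨f^[n] z, hzn, rfl⟩, rfl⟩
  have hsep := hδ ay hayC az hazC hane
  have habs : |ay - az| ≤ lam ^ n := by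
    rw [abs_le]
    constructor <;> linarith
  linarith

end Main2

section Main3
variable (hlam0 : 0 < lam) (hlam1 : lam < 1)
variable (hSfin : S.Finite) (hS0 : (0:ℝ) ∈ S)
variable (hmap : Set.MapsTo f (Set.Ico 0 1) (Set.Ico 0 1))
variable (hpiece : ∀ x ∈ Set.Ico (0:ℝ) 1, ∀ y ∈ Set.Ico (0:ℝ) 1, x < y →
      (∀ s ∈ S, s ∉ Set.Ioc x y) → f x < f y ∧ f y - f x ≤ lam * (y - x))

include hSfin hS0 hmap in
lemma itin_image_finite (k : ℕ) : (itin f S k '' Set.Ico (0:ℝ) 1).Finite := by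
  apply Set.Finite.subset (Set.Finite.pi' (fun _ : Fin k => hSfin))
  rintro v ⟨x, hx, rfl⟩
  intro j
  exact (sg_mem_le hSfin hS0 (orbit_mem hmap hx (j:ℕ)).1).1

include hlam0 hlam1 hSfin hS0 hmap hpiece in
lemma step_count (m : ℕ) :
    ∃ N₀ : ℕ, ∀ n, N₀ ≤ n →
      (itin f S (n+m) '' Set.Ico (0:ℝ) 1).ncard ≤ 2 * (itin f S n '' Set.Ico (0:ℝ) 1).ncard := by
  classical
  obtain ⟨δ, hδ0, hδ⟩ :=
    exists_sep ((itin_image_finite hSfin hS0 hmap m).image (atomInf f S m))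
  obtain ⟨N₀, hN₀⟩ := exists_pow_lt_of_lt_one hδ0 hlam1
  refine ⟨N₀, ?_⟩
  intro n hn
  have hld : lam ^ n < δ :=
    lt_of_le_of_lt (pow_le_pow_of_le_one hlam0.le hlam1.le hn) hN₀
  set P : (Fin (n+m) → ℝ) → (Fin n → ℝ) := fun v j => v (Fin.castAdd m j) with hP
  have hPcomm : ∀ x : ℝ, P (itin f S (n+m) x) = itin f S n x := by
    intro x
    funext j
    show sg S (f^[((Fin.castAdd m j : Fin (n+m)) : ℕ)] x) = sg S (f^[(j:ℕ)] x)
    rw [Fin.coe_castAdd]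
  have htail : ∀ x x' : ℝ, itin f S n x = itin f S n x' →
      itin f S m (f^[n] x) = itin f S m (f^[n] x') →
      itin f S (n+m) x = itin f S (n+m) x' := by
    intro x x' h1 h2
    funext k
    rw [itin_apply, itin_apply]
    by_cases hk : (k:ℕ) < n
    · have := congrFun h1 ⟨(k:ℕ), hk⟩
      rw [itin_apply, itin_apply] at this
      exact this
    · push_neg at hk
      have hk2 : (k:ℕ) - n < m := by
        have := k.2
        omega
      have hdecomp : ∀ w : ℝ, f^[(k:ℕ)] w = f^[(k:ℕ)-n] (f^[n] w) := by
        intro w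
        rw [← Function.iterate_add_apply]
        congr 1
        omega
      rw [hdecomp x, hdecomp x']
      have := congrFun h2 ⟨(k:ℕ)-n, hk2⟩
      rw [itin_apply, itin_apply] at this
      exact this
  set sF : Finset (Fin (n+m) → ℝ) := (itin_image_finite hSfin hS0 hmap (n+m)).toFinset with hsF
  set tF : Finset (Fin n → ℝ) := (itin_image_finite hSfin hS0 hmap n).toFinset with htF
  have himg : sF.image P ⊆ tF := by
    intro w hw
    simp only [hsF, htF, Finset.mem_image, Set.Finite.mem_toFinset] at hw ⊢
    obtain ⟨v, ⟨x, hx, rfl⟩, rfl⟩ := hw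
    exact ⟨x, hx, hPcomm x⟩
  have hfib : ∀ w ∈ sF.image P, (sF.filter (fun v => P v = w)).card ≤ 2 := by
    intro w _
    by_contra hcon
    push_neg at hcon
    obtain ⟨v₁, hv₁, v₂, hv₂, v₃, hv₃, h12, h13, h23⟩ := Finset.two_lt_card.mp hcon
    simp only [hsF, Finset.mem_filter, Set.Finite.mem_toFinset] at hv₁ hv₂ hv₃
    obtain ⟨⟨x₁, hx₁, hvx₁⟩, hP₁⟩ := hv₁
    obtain ⟨⟨x₂, hx₂, hvx₂⟩, hP₂⟩ := hv₂
    obtain ⟨⟨x₃, hx₃, hvx₃⟩, hP₃⟩ := hv₃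
    have pre₁ : itin f S n x₁ = w := by rw [← hPcomm x₁, hvx₁]; exact hP₁
    have pre₂ : itin f S n x₂ = w := by rw [← hPcomm x₂, hvx₂]; exact hP₂
    have pre₃ : itin f S n x₃ = w := by rw [← hPcomm x₃, hvx₃]; exact hP₃
    have t12 : itin f S m (f^[n] x₁) ≠ itin f S m (f^[n] x₂) := fun h =>
      h12 (by rw [← hvx₁, ← hvx₂]; exact htail x₁ x₂ (pre₁.trans pre₂.symm) h)
    have t13 : itin f S m (f^[n] x₁) ≠ itin f S m (f^[n] x₃) := fun h =>
      h13 (by rw [← hvx₁, ← hvx₃]; exact htail x₁ x₃ (pre₁.trans pre₃.symm) h)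
    have t23 : itin f S m (f^[n] x₂) ≠ itin f S m (f^[n] x₃) := fun h =>
      h23 (by rw [← hvx₂, ← hvx₃]; exact htail x₂ x₃ (pre₂.trans pre₃.symm) h)
    rcases le_total x₁ x₂ with a12 | a21
    · rcases le_total x₁ x₃ with a13 | a31
      · exact core hlam0 hlam1 hSfin hS0 hmap hpiece hδ hld hx₁ hx₂ hx₃ a12 a13
          (pre₁.trans pre₂.symm) (pre₁.trans pre₃.symm) t12 t13 t23
      · exact core hlam0 hlam1 hSfin hS0 hmap hpiece hδ hld hx₃ hx₁ hx₂ a31 (a31.trans a12)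
          (pre₃.trans pre₁.symm) (pre₃.trans pre₂.symm) t13.symm t23.symm t12
    · rcases le_total x₂ x₃ with a23 | a32
      · exact core hlam0 hlam1 hSfin hS0 hmap hpiece hδ hld hx₂ hx₁ hx₃ a21 a23
          (pre₂.trans pre₁.symm) (pre₂.trans pre₃.symm) t12.symm t23 t13
      · exact core hlam0 hlam1 hSfin hS0 hmap hpiece hδ hld hx₃ hx₂ hx₁ a32 (a32.trans a21)
          (pre₃.trans pre₂.symm) (pre₃.trans pre₁.symm) t23.symm t13.symm t12.symm
  calc (itin f S (n+m) '' Set.Ico (0:ℝ) 1).ncard = sF.card :=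
        Set.ncard_eq_toFinset_card _ (itin_image_finite hSfin hS0 hmap (n+m))
    _ ≤ 2 * (sF.image P).card := Finset.card_le_mul_card_image sF 2 hfib
    _ ≤ 2 * tF.card := Nat.mul_le_mul_left 2 (Finset.card_le_card himg)
    _ = 2 * (itin f S n '' Set.Ico (0:ℝ) 1).ncard := by
        rw [Set.ncard_eq_toFinset_card _ (itin_image_finite hSfin hS0 hmap n)]

end Main3

end PCAux

/-- A piecewise increasing λ-contraction of [0,1) with finite singular set
has zero singular entropy: `limsup (1/n) log #𝓘ₙ = 0`, where `𝓘ₙ` is the set of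
itineraries of order `n` realized by points of `[0,1)`.  The itinerary of `x` records,
for each `j < n`, the left endpoint `sSup {s ∈ S | s ≤ f^[j] x}` of the partition piece
`[s, s')` containing `f^[j] x`. -/
theorem stmt_2 (f : ℝ → ℝ) (S : Set ℝ) (lam : ℝ)
    (hlam0 : 0 < lam) (hlam1 : lam < 1)
    (hSfin : S.Finite) (hS0 : (0:ℝ) ∈ S) (hSsub : S ⊆ Set.Ico 0 1)
    (hmap : Set.MapsTo f (Set.Ico 0 1) (Set.Ico 0 1))
    (hrc : ∀ x ∈ Set.Ico (0:ℝ) 1, ContinuousWithinAt f (Set.Ici x) x)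
    (hpiece : ∀ x ∈ Set.Ico (0:ℝ) 1, ∀ y ∈ Set.Ico (0:ℝ) 1, x < y →
      (∀ s ∈ S, s ∉ Set.Ioc x y) → f x < f y ∧ f y - f x ≤ lam * (y - x)) :
    Filter.atTop.limsup (fun n : ℕ =>
      Real.log (Set.ncard
        ((fun x => fun j : Fin n => sSup {s | s ∈ S ∧ s ≤ f^[(j:ℕ)] x}) ''
          (Set.Ico (0:ℝ) 1))) / n) = 0 := by
  classical
  have key : Filter.atTop.limsup
      (fun n : ℕ => Real.log ((PCAux.itin f S n '' Set.Ico (0:ℝ) 1).ncard) / n) = 0 := by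
    set p : ℕ → ℕ := fun n => (PCAux.itin f S n '' Set.Ico (0:ℝ) 1).ncard with hp
    set u : ℕ → ℝ := fun n => Real.log (p n) / n with hu
    have hppos : ∀ n, 0 < p n := by
      intro n
      rw [hp]
      rw [Set.ncard_pos (PCAux.itin_image_finite hSfin hS0 hmap n)]
      exact ⟨PCAux.itin f S n 0, 0, ⟨le_refl 0, one_pos⟩, rfl⟩
    have hstep := PCAux.step_count hlam0 hlam1 hSfin hS0 hmap hpiece
    -- eventual logarithmic bound for every m
    have ubound : ∀ m : ℕ, 0 < m → ∃ c : ℝ, 0 ≤ c ∧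
        ∀ᶠ n : ℕ in Filter.atTop, Real.log (p n) ≤ (n : ℝ) * (Real.log 2 / m) + c := by
      intro m hm
      obtain ⟨N₀, hN₀⟩ := hstep m
      have iter : ∀ k r : ℕ, p (N₀ + r + k * m) ≤ 2 ^ k * p (N₀ + r) := by
        intro k r
        induction k with
        | zero => simpa using le_refl _
        | succ k ih =>
          have he : N₀ + r + (k+1) * m = (N₀ + r + k * m) + m := by ring
          rw [he]
          calc p ((N₀ + r + k * m) + m) ≤ 2 * p (N₀ + r + k * m) := hN₀ _ (by omega)
            _ ≤ 2 * (2 ^ k * p (N₀ + r)) := Nat.mul_le_mul_left 2 ih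
            _ = 2 ^ (k+1) * p (N₀ + r) := by ring
      set M : ℕ := (Finset.range m).sup (fun r => p (N₀ + r)) with hM
      have hM1 : 1 ≤ M := by
        have h0 : p (N₀ + 0) ≤ M :=
          Finset.le_sup (f := fun r => p (N₀ + r)) (Finset.mem_range.mpr hm)
        exact le_trans (hppos (N₀ + 0)) h0
      refine ⟨Real.log M, Real.log_nonneg (by exact_mod_cast hM1), ?_⟩
      filter_upwards [Filter.eventually_ge_atTop N₀] with n hn
      obtain ⟨k, r, hr, hnk⟩ : ∃ k r : ℕ, r < m ∧ n = N₀ + r + k * m := by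
        refine ⟨(n - N₀) / m, (n - N₀) % m, Nat.mod_lt _ hm, ?_⟩
        calc n = N₀ + (n - N₀) := (Nat.add_sub_cancel' hn).symm
          _ = N₀ + ((n - N₀) / m * m + (n - N₀) % m) := by rw [Nat.div_add_mod']
          _ = N₀ + (n - N₀) % m + (n - N₀) / m * m := by ring
      have hb : p n ≤ 2 ^ k * M := by
        rw [hnk]
        exact le_trans (iter k r)
          (Nat.mul_le_mul_left _ (Finset.le_sup (f := fun r => p (N₀ + r)) (Finset.mem_range.mpr hr)))
      have hb' : (p n : ℝ) ≤ (2:ℝ) ^ k * (M:ℝ) := by exact_mod_cast hb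
      have hMne : (M:ℝ) ≠ 0 := by
        have : (0:ℕ) < M := hM1
        exact_mod_cast this.ne'
      have hlog : Real.log (p n) ≤ (k:ℝ) * Real.log 2 + Real.log M := by
        calc Real.log (p n) ≤ Real.log ((2:ℝ) ^ k * (M:ℝ)) :=
              Real.log_le_log (by exact_mod_cast hppos n) hb'
          _ = Real.log ((2:ℝ) ^ k) + Real.log M := Real.log_mul (by positivity) hMne
          _ = (k:ℝ) * Real.log 2 + Real.log M := by rw [Real.log_pow]
      have hkm : (k:ℝ) * (m:ℝ) ≤ (n:ℝ) := by
        have : k * m ≤ n := by omega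
        exact_mod_cast this
      have hmpos : (0:ℝ) < (m:ℝ) := by exact_mod_cast hm
      have hkn : (k:ℝ) ≤ (n:ℝ) / (m:ℝ) := (le_div_iff₀ hmpos).mpr hkm
      have hklog : (k:ℝ) * Real.log 2 ≤ ((n:ℝ) / (m:ℝ)) * Real.log 2 :=
        mul_le_mul_of_nonneg_right hkn (Real.log_nonneg one_le_two)
      have heq : ((n:ℝ) / (m:ℝ)) * Real.log 2 = (n:ℝ) * (Real.log 2 / (m:ℝ)) := by ring
      linarith [hlog, hklog, heq ▸ hklog]
    have hu0 : ∀ n, 0 ≤ u n := by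
      intro n
      exact div_nonneg (Real.log_nonneg (by exact_mod_cast hppos n)) (Nat.cast_nonneg n)
    -- eventual upper bounds on u
    have hub : ∀ m : ℕ, 0 < m → ∀ ε : ℝ, 0 < ε →
        ∀ᶠ n : ℕ in Filter.atTop, u n ≤ Real.log 2 / m + ε := by
      intro m hm ε hε
      obtain ⟨c, hc0, hev⟩ := ubound m hm
      obtain ⟨N₁, hN₁⟩ := exists_nat_gt (c / ε)
      filter_upwards [hev, Filter.eventually_ge_atTop (max N₁ 1)] with n hlogb hn'
      have hn1 : 1 ≤ n := le_trans (le_max_right _ _) hn'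
      have hnN : N₁ ≤ n := le_trans (le_max_left _ _) hn'
      have hnpos : (0:ℝ) < (n:ℝ) := by exact_mod_cast hn1
      have h1 : u n ≤ ((n:ℝ) * (Real.log 2 / m) + c) / n := (div_le_div_iff_of_pos_right hnpos).mpr hlogb
      have h2 : ((n:ℝ) * (Real.log 2 / m) + c) / n = Real.log 2 / m + c / n := by
        field_simp
      have h3 : c / (n:ℝ) ≤ ε := by
        rw [div_le_iff₀ hnpos]
        have hcN : c < ε * N₁ := by
          have := (div_lt_iff₀ hε).mp hN₁
          linarith
        have hNn : (N₁:ℝ) ≤ (n:ℝ) := by exact_mod_cast hnN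
        nlinarith
      calc u n ≤ Real.log 2 / m + c / n := h2 ▸ h1
        _ ≤ Real.log 2 / m + ε := by linarith
    have hcob : Filter.IsCoboundedUnder (· ≤ ·) Filter.atTop u :=
      Filter.isCoboundedUnder_le_of_le Filter.atTop hu0
    have hbdd : Filter.IsBoundedUnder (· ≤ ·) Filter.atTop u := by
      refine ⟨Real.log 2 / ((1:ℕ):ℝ) + 1, ?_⟩
      rw [Filter.eventually_map]
      exact hub 1 one_pos 1 one_pos
    have h0le : 0 ≤ Filter.atTop.limsup u :=
      Filter.le_limsup_of_frequently_le ((Filter.Eventually.of_forall hu0).frequently) hbdd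
    have hle : ∀ ε : ℝ, 0 < ε → Filter.atTop.limsup u ≤ ε := by
      intro ε hε
      obtain ⟨m, hm⟩ := exists_nat_gt (Real.log 2 / (ε/2))
      have hmpos : 0 < m := by
        have h' : (0:ℝ) ≤ Real.log 2 / (ε/2) :=
          div_nonneg (Real.log_nonneg one_le_two) (by linarith)
        exact_mod_cast Nat.cast_pos.mp (lt_of_le_of_lt h' hm)
      have hm2 : Real.log 2 / (m:ℝ) ≤ ε / 2 := by
        have hmr : (0:ℝ) < (m:ℝ) := by exact_mod_cast hmpos
        rw [div_le_iff₀ hmr]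
        have := (div_lt_iff₀ (by linarith : (0:ℝ) < ε/2)).mp hm
        nlinarith
      have hlim : Filter.atTop.limsup u ≤ Real.log 2 / m + ε / 2 :=
        Filter.limsup_le_of_le hcob (hub m hmpos (ε/2) (by linarith))
      linarith
    refine le_antisymm ?_ h0le
    by_contra hcon
    push_neg at hcon
    have := hle (Filter.atTop.limsup u / 2) (by linarith)
    linarith
  exact key
end

section
/- Let f : [0,1) → [0,1) be a piecewise increasing contraction with n discontinuity points. Assume ℓ of these discontinuity points have image 0 under f. Then f has at most n + 1 − ℓ periodic orbits. -/
/-!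
Every periodic orbit attracts the forward orbit of a point of the singular set `{0} ∪ D`, and
a point is attracted to at most one periodic orbit, so periodic orbits inject into singular
points; a discontinuity mapped to `0` is never needed, since `0` is attracted to the same orbit.

To find the singular point, follow the orbit of a periodic point `x` from below by a point kept
in the same continuity piece, restarting at the left end of the piece whenever `f` pushes it
out. The gap to the orbit shrinks geometrically, whereas a restart leaves a gap at least the
distance from the (finite) orbit of `x` to the left ends of its pieces; so restarts stop, and
the last restart point shadows the orbit of `x` with geometric rate.
-/

open Set Function Filter Topology

lemma finite_and_ncard_le_of_exists_unique_witness {β γ : Type*} [Nonempty γ] {𝒪 : Set β}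
    {T : Set γ} (P : γ → β → Prop) (hT : T.Finite) (hex : ∀ O ∈ 𝒪, ∃ s ∈ T, P s O)
    (huniq : ∀ s O O', P s O → P s O' → O = O') : 𝒪.Finite ∧ 𝒪.ncard ≤ T.ncard := by
  choose! F hFT hFP using hex
  have hinj : InjOn F 𝒪 := fun O hO O' hO' hFO =>
    huniq (F O) O O' (hFP O hO) (hFO ▸ hFP O' hO')
  exact ⟨hT.of_injOn hFT hinj, ncard_le_ncard_of_injOn F hFT hinj hT⟩

namespace Function.IsPeriodicPt

variable {α : Type*} {f : α → α} {p : ℕ} {y : α}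

lemma range_iterate_apply_iterate (hy : IsPeriodicPt f p y) (hp : 0 < p) (c : ℕ) :
    range (fun m => f^[m] (f^[c] y)) = range (fun m => f^[m] y) := by
  ext w
  constructor
  · rintro ⟨m, rfl⟩
    exact ⟨m + c, iterate_add_apply f m c y⟩
  · rintro ⟨m, rfl⟩
    refine ⟨m + (p - 1) * c, ?_⟩
    have hshift : m + (p - 1) * c + c = m + p * c := by
      obtain ⟨q, rfl⟩ := Nat.exists_eq_add_of_lt hp
      simp only [Nat.zero_add, Nat.add_sub_cancel]
      ring
    show f^[_] (f^[c] y) = _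
    rw [← iterate_add_apply, hshift, iterate_add_apply, (hy.mul_const c).eq]

lemma exists_pos_le_comp_iterate (hy : IsPeriodicPt f p y) (hp : 0 < p) {φ : α → ℝ}
    (hφ : ∀ j, 0 < φ (f^[j] y)) : ∃ d > 0, ∀ j, d ≤ φ (f^[j] y) := by
  obtain ⟨i, -, hi⟩ := (Finset.range p).exists_min_image (fun i => φ (f^[i] y))
    (Finset.nonempty_range_iff.mpr hp.ne')
  refine ⟨φ (f^[i] y), hφ i, fun j => ?_⟩
  rw [← hy.iterate_mod_apply j]
  exact hi _ (Finset.mem_range.mpr (Nat.mod_lt j hp))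

end Function.IsPeriodicPt

section Asymptotic

variable {α : Type*} [MetricSpace α] {f : α → α}

def OrbitsAsymptotic (f : α → α) (x y : α) : Prop :=
  Tendsto (fun k => dist (f^[k] x) (f^[k] y)) atTop (𝓝 0)

namespace OrbitsAsymptotic

variable {x y z : α}

lemma refl (x : α) : OrbitsAsymptotic f x x := by
  simp [OrbitsAsymptotic]

lemma symm (h : OrbitsAsymptotic f x y) : OrbitsAsymptotic f y x := by
  simpa only [OrbitsAsymptotic, dist_comm] using h

lemma trans (hxy : OrbitsAsymptotic f x y) (hyz : OrbitsAsymptotic f y z) :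
    OrbitsAsymptotic f x z :=
  squeeze_zero (fun k => dist_nonneg) (fun k => dist_triangle _ (f^[k] y) _)
    (by simpa using hxy.add hyz)

lemma apply (h : OrbitsAsymptotic f x y) : OrbitsAsymptotic f (f x) (f y) := by
  simpa only [OrbitsAsymptotic, ← iterate_succ_apply] using (tendsto_add_atTop_iff_nat 1).mpr h

lemma eq_of_isPeriodicPt {p q : ℕ} (h : OrbitsAsymptotic f x y) (hx : IsPeriodicPt f p x)
    (hy : IsPeriodicPt f q y) (hp : 0 < p) (hq : 0 < q) : x = y := by
  have hsub : Tendsto (fun m => dist (f^[m * (p * q)] x) (f^[m * (p * q)] y)) atTop (𝓝 0) :=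
    h.comp (tendsto_atTop_mono (fun m => Nat.le_mul_of_pos_right m (Nat.mul_pos hp hq))
      tendsto_id)
  have hconst : (fun m => dist (f^[m * (p * q)] x) (f^[m * (p * q)] y)) = fun _ => dist x y := by
    ext m
    rw [((hx.mul_const q).const_mul m).eq, ((hy.const_mul p).const_mul m).eq]
  rw [hconst] at hsub
  exact dist_eq_zero.mp (tendsto_nhds_unique tendsto_const_nhds hsub)

end OrbitsAsymptotic

end Asymptotic

section Attraction

variable {α : Type*} [MetricSpace α] {f : α → α} {s : α} {O : Set α}

def IsAttractedTo (f : α → α) (s : α) (O : Set α) : Prop :=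
  ∃ y, (∃ p, 0 < p ∧ IsPeriodicPt f p y) ∧ O = range (fun m => f^[m] y) ∧ OrbitsAsymptotic f s y

lemma IsAttractedTo.unique {O' : Set α} (h : IsAttractedTo f s O) (h' : IsAttractedTo f s O') :
    O = O' := by
  obtain ⟨y, ⟨p, hp, hy⟩, rfl, hsy⟩ := h
  obtain ⟨y', ⟨q, hq, hy'⟩, rfl, hsy'⟩ := h'
  rw [(hsy.symm.trans hsy').eq_of_isPeriodicPt hy hy' hp hq]

lemma IsAttractedTo.apply (h : IsAttractedTo f s O) : IsAttractedTo f (f s) O := by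
  obtain ⟨y, ⟨p, hp, hy⟩, rfl, hsy⟩ := h
  exact ⟨f y, ⟨p, hp, hy.apply⟩, (hy.range_iterate_apply_iterate hp 1).symm, hsy.apply⟩

lemma isAttractedTo_range_of_iterate {x : α} {p j : ℕ} (hx : IsPeriodicPt f p x) (hp : 0 < p)
    (h : OrbitsAsymptotic f s (f^[j] x)) : IsAttractedTo f s (range (fun m => f^[m] x)) :=
  ⟨f^[j] x, ⟨p, hp, hx.apply_iterate j⟩, (hx.range_iterate_apply_iterate hp j).symm, h⟩

end Attraction

def PiecewiseContracting (f : ℝ → ℝ) (S : Set ℝ) (lam : ℝ) : Prop :=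
  ∀ x ∈ Ico (0 : ℝ) 1, ∀ y ∈ Ico (0 : ℝ) 1, x < y → (∀ s ∈ S, s ∉ Ioc x y) →
    f x < f y ∧ f y - f x ≤ lam * (y - x)

lemma PiecewiseContracting.le_and_sub_le {f : ℝ → ℝ} {S : Set ℝ} {lam a y : ℝ}
    (hf : PiecewiseContracting f S lam) (ha : a ∈ Ico (0 : ℝ) 1) (hy : y ∈ Ico (0 : ℝ) 1)
    (hay : a ≤ y) (hS : ∀ s ∈ S, s ∉ Ioc a y) : f a ≤ f y ∧ f y - f a ≤ lam * (y - a) := by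
  rcases hay.eq_or_lt with rfl | hlt
  · simp
  · exact (hf a ha y hy hlt hS).imp le_of_lt id

noncomputable def pieceStart (S : Set ℝ) (y : ℝ) : ℝ := sSup {s ∈ S | s ≤ y}

section PieceStart

variable {S : Set ℝ} {y : ℝ}

lemma le_pieceStart (hS : S.Finite) {s : ℝ} (hs : s ∈ S) (hsy : s ≤ y) : s ≤ pieceStart S y :=
  le_csSup (hS.subset (sep_subset _ _)).bddAbove ⟨hs, hsy⟩

lemma notMem_Ioc_pieceStart (hS : S.Finite) {s : ℝ} (hs : s ∈ S) : s ∉ Ioc (pieceStart S y) y :=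
  fun h => (le_pieceStart hS hs h.2).not_gt h.1

lemma pieceStart_mem_and_le (hS : S.Finite) (h0 : 0 ∈ S) (hy : 0 ≤ y) :
    pieceStart S y ∈ S ∧ pieceStart S y ≤ y :=
  Nonempty.csSup_mem (s := {s ∈ S | s ≤ y}) ⟨0, h0, hy⟩ (hS.subset (sep_subset _ _))

end PieceStart

noncomputable def shadowSeq (f : ℝ → ℝ) (S : Set ℝ) (x : ℝ) : ℕ → ℝ
  | 0 => pieceStart S x
  | j + 1 => max (f (shadowSeq f S x j)) (pieceStart S (f^[j + 1] x))

section Shadow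

variable {f : ℝ → ℝ} {S : Set ℝ} {lam x : ℝ}

lemma shadowSeq_succ_of_ne {j : ℕ} (h : shadowSeq f S x (j + 1) ≠ pieceStart S (f^[j + 1] x)) :
    shadowSeq f S x (j + 1) = f (shadowSeq f S x j) := by
  rw [shadowSeq] at h ⊢
  exact (max_choice _ _).resolve_right h

lemma PiecewiseContracting.shadowSeq_spec (hf : PiecewiseContracting f S lam)
    (hmap : MapsTo f (Ico 0 1) (Ico 0 1)) (hS : S.Finite) (h0 : 0 ∈ S) (hlam : 0 ≤ lam)
    (hx : x ∈ Ico (0 : ℝ) 1) (j : ℕ) :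
    shadowSeq f S x j ∈ Ico (0 : ℝ) 1 ∧ shadowSeq f S x j ≤ f^[j] x ∧
      (∀ s ∈ S, s ∉ Ioc (shadowSeq f S x j) (f^[j] x)) ∧ f^[j] x - shadowSeq f S x j ≤ lam ^ j := by
  induction j with
  | zero =>
    obtain ⟨-, hle⟩ := pieceStart_mem_and_le hS h0 hx.1
    have hnonneg := le_pieceStart hS h0 hx.1
    exact ⟨⟨hnonneg, hle.trans_lt hx.2⟩, hle, fun s hs => notMem_Ioc_pieceStart hS hs,
      by simp only [shadowSeq, iterate_zero_apply, pow_zero]; linarith [hx.2]⟩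
  | succ j ih =>
    obtain ⟨hmem, hle, hfree, hdist⟩ := ih
    have hxj1 : f^[j + 1] x ∈ Ico (0 : ℝ) 1 := hmap.iterate (j + 1) hx
    obtain ⟨hmono, hcontr⟩ := hf.le_and_sub_le hmem (hmap.iterate j hx) hle hfree
    rw [← iterate_succ_apply' f j x] at hmono hcontr
    obtain ⟨-, hps⟩ := pieceStart_mem_and_le hS h0 hxj1.1
    have hnext_le : shadowSeq f S x (j + 1) ≤ f^[j + 1] x := max_le hmono hps
    refine ⟨⟨(le_pieceStart hS h0 hxj1.1).trans (le_max_right _ _),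
      hnext_le.trans_lt hxj1.2⟩, hnext_le,
      fun s hs h => notMem_Ioc_pieceStart hS hs ⟨(le_max_right _ _).trans_lt h.1, h.2⟩, ?_⟩
    calc f^[j + 1] x - shadowSeq f S x (j + 1) ≤ f^[j + 1] x - f (shadowSeq f S x j) :=
          sub_le_sub_left (le_max_left _ _) _
      _ ≤ lam * (f^[j] x - shadowSeq f S x j) := hcontr
      _ ≤ lam ^ (j + 1) := by rw [pow_succ']; gcongr

lemma PiecewiseContracting.exists_shadowSeq_mem_and_eq_iterate
    (hf : PiecewiseContracting f S lam) (hmap : MapsTo f (Ico 0 1) (Ico 0 1)) (hS : S.Finite)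
    (h0 : 0 ∈ S) (hlam0 : 0 ≤ lam) (hlam1 : lam < 1) (hx : x ∈ Ico (0 : ℝ) 1) {d : ℝ}
    (hd : 0 < d) (hgap : ∀ j, d ≤ f^[j] x - pieceStart S (f^[j] x)) :
    ∃ J, shadowSeq f S x J ∈ S ∧ ∀ k, shadowSeq f S x (J + k) = f^[k] (shadowSeq f S x J) := by
  obtain ⟨N, hN⟩ := exists_pow_lt_of_lt_one hd hlam1
  let restarts : ℕ → Prop := fun j => shadowSeq f S x j = pieceStart S (f^[j] x)
  set J := Nat.findGreatest restarts N
  have hJ : restarts J := Nat.findGreatest_spec N.zero_le rfl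
  have hlater : ∀ j, J < j → ¬ restarts j := by
    intro j hJj hj
    by_cases hjN : j ≤ N
    · exact Nat.findGreatest_is_greatest hJj hjN hj
    · have hdist := (hf.shadowSeq_spec hmap hS h0 hlam0 hx j).2.2.2
      have hpow : lam ^ j ≤ lam ^ N := pow_le_pow_of_le_one hlam0 hlam1.le (by omega)
      rw [hj] at hdist
      linarith [hgap j]
  refine ⟨J, hJ ▸ (pieceStart_mem_and_le hS h0 (hmap.iterate J hx).1).1, fun k => ?_⟩
  induction k with
  | zero => rfl
  | succ k ih =>
    rw [← add_assoc, shadowSeq_succ_of_ne (hlater _ (by omega)), ih, iterate_succ_apply']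

lemma PiecewiseContracting.exists_mem_isAttractedTo (hf : PiecewiseContracting f S lam)
    (hmap : MapsTo f (Ico 0 1) (Ico 0 1)) (hS : S.Finite) (h0 : 0 ∈ S) (hlam0 : 0 ≤ lam)
    (hlam1 : lam < 1) (hx : x ∈ Ico (0 : ℝ) 1) {p : ℕ} (hper : IsPeriodicPt f p x) (hp : 0 < p) :
    ∃ s ∈ S, IsAttractedTo f s (range fun m => f^[m] x) := by
  by_cases hhit : ∃ j, f^[j] x ∈ S
  · obtain ⟨j, hj⟩ := hhit
    exact ⟨_, hj, isAttractedTo_range_of_iterate hper hp (OrbitsAsymptotic.refl _)⟩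
  push Not at hhit
  obtain ⟨d, hd, hgap⟩ := hper.exists_pos_le_comp_iterate hp (φ := fun y => y - pieceStart S y)
    fun j => by
      obtain ⟨hmem, hle⟩ := pieceStart_mem_and_le hS h0 (hmap.iterate j hx).1
      exact sub_pos.mpr (hle.lt_of_ne fun h => hhit j (h ▸ hmem))
  obtain ⟨J, hJS, hJ⟩ := hf.exists_shadowSeq_mem_and_eq_iterate hmap hS h0 hlam0 hlam1 hx hd hgap
  refine ⟨_, hJS, isAttractedTo_range_of_iterate hper hp (j := J) ?_⟩
  refine squeeze_zero (fun k => dist_nonneg) (fun k => ?_)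
    ((tendsto_pow_atTop_nhds_zero_of_lt_one hlam0 hlam1).comp (tendsto_add_atTop_nat J))
  obtain ⟨-, hle, -, hdist⟩ := hf.shadowSeq_spec hmap hS h0 hlam0 hx (J + k)
  rw [← hJ k, ← iterate_add_apply, add_comm k J, Real.dist_eq, abs_sub_comm,
    abs_of_nonneg (sub_nonneg.mpr hle)]
  simpa only [comp_apply, add_comm k J] using hdist

end Shadow

theorem stmt_3_general (f : ℝ → ℝ) (D : Set ℝ) (lam : ℝ) (n ℓ : ℕ)
    (hlam0 : 0 < lam) (hlam1 : lam < 1)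
    (hDfin : D.Finite) (hD0 : (0:ℝ) ∉ D)
    (hmap : Set.MapsTo f (Set.Ico 0 1) (Set.Ico 0 1))
    (hpiece : ∀ x ∈ Set.Ico (0:ℝ) 1, ∀ y ∈ Set.Ico (0:ℝ) 1, x < y →
      (∀ s ∈ insert (0:ℝ) D, s ∉ Set.Ioc x y) → f x < f y ∧ f y - f x ≤ lam * (y - x))
    (hn : D.ncard = n) (hl : {x | x ∈ D ∧ f x = 0}.ncard = ℓ) :
    {O : Set ℝ | ∃ x, x ∈ Set.Ico (0:ℝ) 1 ∧ (∃ p, 1 ≤ p ∧ f^[p] x = x) ∧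
        O = Set.range fun m => f^[m] x}.Finite ∧
    {O : Set ℝ | ∃ x, x ∈ Set.Ico (0:ℝ) 1 ∧ (∃ p, 1 ≤ p ∧ f^[p] x = x) ∧
        O = Set.range fun m => f^[m] x}.ncard ≤ n + 1 - ℓ := by
  set E := {x | x ∈ D ∧ f x = 0}
  have hcard : (insert 0 D \ E).ncard = n + 1 - ℓ := by
    rw [ncard_sdiff (fun z hz => mem_insert_of_mem _ hz.1) (hDfin.subset fun z hz => hz.1),
      ncard_insert_of_notMem hD0 hDfin, hn, hl]
  rw [← hcard]
  refine finite_and_ncard_le_of_exists_unique_witness (IsAttractedTo f) (hDfin.insert 0).sdiff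
    (fun O ⟨x, hx, ⟨p, hp, hper⟩, hO⟩ => ?_) fun s O O' => IsAttractedTo.unique
  obtain ⟨s, hs, hsO⟩ := PiecewiseContracting.exists_mem_isAttractedTo hpiece hmap
    (hDfin.insert 0) (mem_insert 0 D) hlam0.le hlam1 hx hper hp
  by_cases hsE : s ∈ E
  · exact ⟨0, ⟨mem_insert 0 D, fun h => hD0 h.1⟩, hO ▸ hsE.2 ▸ hsO.apply⟩
  · exact ⟨s, ⟨hs, hsE⟩, hO ▸ hsO⟩

/-- A piecewise increasing contraction of [0,1) with `n` discontinuity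
points (set `D`), `ℓ` of which are mapped to `0`, has at most `n + 1 - ℓ` periodic
orbits.  The singular set is `{0} ∪ D` and `f` is increasing and `λ`-Lipschitz on each
piece of the induced partition. -/
theorem stmt_3 (f : ℝ → ℝ) (D : Set ℝ) (lam : ℝ) (n ℓ : ℕ)
    (hlam0 : 0 < lam) (hlam1 : lam < 1)
    (hDfin : D.Finite) (hD0 : (0:ℝ) ∉ D) (hDsub : D ⊆ Set.Ico 0 1)
    (hmap : Set.MapsTo f (Set.Ico 0 1) (Set.Ico 0 1))
    (hrc : ∀ x ∈ Set.Ico (0:ℝ) 1, ContinuousWithinAt f (Set.Ici x) x)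
    (hcont : ∀ x ∈ Set.Ico (0:ℝ) 1, x ∉ D → ContinuousWithinAt f (Set.Ico 0 1) x)
    (hpiece : ∀ x ∈ Set.Ico (0:ℝ) 1, ∀ y ∈ Set.Ico (0:ℝ) 1, x < y →
      (∀ s ∈ insert (0:ℝ) D, s ∉ Set.Ioc x y) → f x < f y ∧ f y - f x ≤ lam * (y - x))
    (hn : D.ncard = n) (hl : {x | x ∈ D ∧ f x = 0}.ncard = ℓ) :
    {O : Set ℝ | ∃ x, x ∈ Set.Ico (0:ℝ) 1 ∧ (∃ p, 1 ≤ p ∧ f^[p] x = x) ∧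
        O = Set.range fun m => f^[m] x}.Finite ∧
    {O : Set ℝ | ∃ x, x ∈ Set.Ico (0:ℝ) 1 ∧ (∃ p, 1 ≤ p ∧ f^[p] x = x) ∧
        O = Set.range fun m => f^[m] x}.ncard ≤ n + 1 - ℓ :=
  stmt_3_general f D lam n ℓ hlam0 hlam1 hDfin hD0 hmap hpiece hn hl
end

section
/- Let f : [0,1) → [0,1) be a piecewise increasing contraction whose set of periodic points is nonempty. Define an equivalence relation on the singular set S by x ~ y iff ω(f,x) = ω(f,y), and let A(f) = S/~. Then there exists a map ψ : Per(f) → A(f) such that ψ(x) = ψ(y) if and only if x and y lie on the same periodic orbit. In particular, the number of distinct periodic orbits of f is at most the cardinality of A(f). -/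
/-- The ω-limit set of `x` under iteration of `f`: the cluster points of the orbit. -/
def omegaSet (f : ℝ → ℝ) (x : ℝ) : Set ℝ :=
  {y | MapClusterPt y Filter.atTop fun n => f^[n] x}

/-!
Let `x` be periodic of period `p`. Preimages of finite sets under `f` are finite, so there is a
largest `a ≤ x` some iterate `f^[j] a` (`j < p`) of which is singular. No point of `(a, x]` has a
singular iterate before time `p`, so by the intermediate value theorem the iterates `f^[i]`,
`i ≤ p`, never jump on `[a, x]`: they are increasing and `λ^i`-Lipschitz there. Hence `f^[p]`
maps `[a, x]` into itself and contracts it towards `x`, the orbit of `a` is asymptotic to the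
periodic orbit of `x`, and `ω(f, f^[j] a) = O(f, x)`. Taking `ψ x = f^[j] a`, the class of
`ψ x` in `A(f)` determines the orbit of `x`.
-/

open Set Filter Function Topology

theorem MapClusterPt.of_tendsto_dist {ι X : Type*} [PseudoMetricSpace X] {l : Filter ι}
    {u v : ι → X} {z : X} (huv : Tendsto (fun n => dist (u n) (v n)) l (𝓝 0))
    (hv : MapClusterPt z l v) : MapClusterPt z l u := by
  rw [Metric.nhds_basis_ball.mapClusterPt_iff_frequently] at hv ⊢
  intro ε hε
  refine ((hv (ε / 2) (half_pos hε)).and_eventually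
    (huv.eventually (gt_mem_nhds (half_pos hε)))).mono fun n ⟨hvn, hdist⟩ => ?_
  rw [Metric.mem_ball] at hvn ⊢
  linarith [dist_triangle (u n) (v n) z]

theorem mapClusterPt_iff_of_tendsto_dist {ι X : Type*} [PseudoMetricSpace X] {l : Filter ι}
    {u v : ι → X} {z : X} (huv : Tendsto (fun n => dist (u n) (v n)) l (𝓝 0)) :
    MapClusterPt z l u ↔ MapClusterPt z l v :=
  ⟨.of_tendsto_dist (by simpa only [dist_comm] using huv), .of_tendsto_dist huv⟩

section Omega

variable {f : ℝ → ℝ}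

theorem omegaSet_iterate (j : ℕ) (y : ℝ) : omegaSet f (f^[j] y) = omegaSet f y := by
  have hshift : (fun n => f^[n] (f^[j] y)) = (fun n => f^[n] y) ∘ (· + j) :=
    funext fun n => (iterate_add_apply f n j y).symm
  ext z
  change MapClusterPt z atTop _ ↔ MapClusterPt z atTop _
  rw [hshift, mapClusterPt_comp, map_add_atTop_eq_nat]

theorem omegaSet_eq_range_of_isPeriodicPt {p : ℕ} {x : ℝ} (hp : 0 < p)
    (hx : IsPeriodicPt f p x) :
    omegaSet f x = range fun m => f^[m] x := by
  refine Subset.antisymm (fun z hz => ?_) ?_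
  · have hfin : (range fun m => f^[m] x).Finite :=
      ((finite_Iio p).image fun m => f^[m] x).subset <| by
        rintro _ ⟨n, rfl⟩
        exact ⟨n % p, Nat.mod_lt n hp, hx.iterate_mod_apply n⟩
    exact hfin.isClosed.mem_of_mapClusterPt hz (Eventually.of_forall mem_range_self)
  · rintro _ ⟨m, rfl⟩
    refine MapClusterPt.of_comp (φ := fun q => m + p * q)
      (tendsto_atTop_mono (fun q => ?_) tendsto_id) ?_
    · exact le_add_left (Nat.le_mul_of_pos_left q hp)
    · have hconst : (fun n => f^[n] x) ∘ (fun q => m + p * q) = fun _ => f^[m] x := by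
        funext q
        simp only [comp_apply, iterate_add_apply, (hx.mul_const q).eq]
      rw [hconst]
      exact tendsto_const_nhds.mapClusterPt

theorem omegaSet_eq_range_of_tendsto_dist {p : ℕ} {x y : ℝ} (hp : 0 < p)
    (hx : IsPeriodicPt f p x)
    (hxy : Tendsto (fun n => dist (f^[n] y) (f^[n] x)) atTop (𝓝 0)) :
    omegaSet f y = range fun m => f^[m] x := by
  rw [← omegaSet_eq_range_of_isPeriodicPt hp hx]
  ext z
  exact mapClusterPt_iff_of_tendsto_dist hxy

end Omega

def StrictMonoOnPieces (f : ℝ → ℝ) (S : Set ℝ) : Prop :=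
  ∀ x ∈ Ico (0:ℝ) 1, ∀ y ∈ Ico (0:ℝ) 1, x < y →
    (∀ s ∈ S, s ∉ Ioc x y) → f x < f y

def IncreasingLipschitzOnPieces (f : ℝ → ℝ) (S : Set ℝ) (lam : ℝ) : Prop :=
  ∀ x ∈ Ico (0:ℝ) 1, ∀ y ∈ Ico (0:ℝ) 1, x < y →
    (∀ s ∈ S, s ∉ Ioc x y) → f x < f y ∧ f y - f x ≤ lam * (y - x)

theorem IncreasingLipschitzOnPieces.strictMonoOnPieces {f : ℝ → ℝ} {S : Set ℝ} {lam : ℝ}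
    (h : IncreasingLipschitzOnPieces f S lam) : StrictMonoOnPieces f S :=
  fun x hx y hy hxy hS => (h x hx y hy hxy hS).1

theorem continuousOn_of_le_of_sub_le {g : ℝ → ℝ} {I : Set ℝ} {K : ℝ}
    (h : ∀ y ∈ I, ∀ z ∈ I, y ≤ z → g y ≤ g z ∧ g z - g y ≤ K * (z - y)) :
    ContinuousOn g I := by
  refine (LipschitzOnWith.of_dist_le' (K := K) fun y hy z hz => ?_).continuousOn
  rcases le_total y z with hyz | hzy
  · obtain ⟨hle, hsub⟩ := h y hy z hz hyz
    rwa [dist_comm, dist_comm y, Real.dist_eq, Real.dist_eq, abs_of_nonneg (sub_nonneg.2 hle),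
      abs_of_nonneg (sub_nonneg.2 hyz)]
  · obtain ⟨hle, hsub⟩ := h z hz y hy hzy
    rwa [Real.dist_eq, Real.dist_eq, abs_of_nonneg (sub_nonneg.2 hle),
      abs_of_nonneg (sub_nonneg.2 hzy)]

section PiecewiseContraction

variable {f : ℝ → ℝ} {S : Set ℝ} {lam : ℝ}

theorem finite_inter_preimage_singleton (hSfin : S.Finite) (hS0 : (0:ℝ) ∈ S)
    (hinc : StrictMonoOnPieces f S) (b : ℝ) : (Ico 0 1 ∩ f ⁻¹' {b}).Finite := by
  -- two points of a fiber are separated by a singular point, so the last singular point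
  -- to the left of `w` determines `w` within its fiber
  set last : ℝ → ℝ := fun w => sSup (S ∩ Iic w)
  have hlast : ∀ w ∈ Ico (0:ℝ) 1, last w ∈ S ∩ Iic w := fun w hw =>
    Nonempty.csSup_mem ⟨0, hS0, hw.1⟩ (hSfin.inter_of_left _)
  have hmono : StrictMonoOn last (Ico 0 1 ∩ f ⁻¹' {b}) := by
    intro u hu v hv huv
    obtain ⟨s, hs, hsuv⟩ : ∃ s ∈ S, s ∈ Ioc u v := by
      by_contra! h
      exact (hinc u hu.1 v hv.1 huv h).ne (hu.2.trans hv.2.symm)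
    exact (hlast u hu.1).2.trans_lt
      (hsuv.1.trans_le (le_csSup (hSfin.inter_of_left _).bddAbove ⟨hs, hsuv.2⟩))
  refine Finite.of_finite_image (hSfin.subset ?_) hmono.injOn
  rintro _ ⟨w, hw, rfl⟩
  exact (hlast w hw.1).1

theorem finite_inter_preimage (hSfin : S.Finite) (hS0 : (0:ℝ) ∈ S)
    (hinc : StrictMonoOnPieces f S) {B : Set ℝ} (hB : B.Finite) : (Ico 0 1 ∩ f ⁻¹' B).Finite := by
  rw [← biUnion_preimage_singleton, inter_iUnion₂]
  exact hB.biUnion fun b _ => finite_inter_preimage_singleton hSfin hS0 hinc b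

theorem finite_inter_preimage_iterate (hSfin : S.Finite) (hS0 : (0:ℝ) ∈ S)
    (hmap : MapsTo f (Ico 0 1) (Ico 0 1)) (hinc : StrictMonoOnPieces f S) (j : ℕ) :
    (Ico 0 1 ∩ f^[j] ⁻¹' S).Finite := by
  induction j with
  | zero => exact hSfin.subset inter_subset_right
  | succ j ih =>
    refine (finite_inter_preimage hSfin hS0 hinc ih).subset fun w hw => ⟨hw.1, hmap hw.1, ?_⟩
    simpa only [mem_preimage, iterate_succ_apply] using hw.2

theorem exists_singular_gap (hSfin : S.Finite) (hS0 : (0:ℝ) ∈ S)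
    (hmap : MapsTo f (Ico 0 1) (Ico 0 1)) (hinc : StrictMonoOnPieces f S)
    {x : ℝ} (hx : x ∈ Ico (0:ℝ) 1) {p : ℕ} (hp : 0 < p) :
    ∃ a ∈ Icc 0 x, (∃ j < p, f^[j] a ∈ S) ∧ ∀ w ∈ Ioc a x, ∀ j < p, f^[j] w ∉ S := by
  set T := ⋃ j ∈ Iio p, Ico 0 1 ∩ f^[j] ⁻¹' S
  have hT : (T ∩ Iic x).Finite := ((finite_Iio p).biUnion fun j _ =>
    finite_inter_preimage_iterate hSfin hS0 hmap hinc j).inter_of_left _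
  obtain ⟨a, ⟨haT, hax⟩, hamax⟩ :=
    exists_max_image (T ∩ Iic x) id hT ⟨0, mem_biUnion hp ⟨⟨le_rfl, one_pos⟩, hS0⟩, hx.1⟩
  obtain ⟨j, hj, ha, hjS⟩ := mem_iUnion₂.1 haT
  refine ⟨a, ⟨ha.1, hax⟩, ⟨j, hj, hjS⟩, fun w hw i hi hiS => ?_⟩
  have hw01 : w ∈ Ico (0:ℝ) 1 := ⟨ha.1.trans hw.1.le, hw.2.trans_lt hx.2⟩
  exact hw.1.not_ge (hamax w ⟨mem_biUnion hi ⟨hw01, hiS⟩, hw.2⟩)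

theorem iterate_le_and_sub_le_of_gap (hlam0 : 0 ≤ lam) (hmap : MapsTo f (Ico 0 1) (Ico 0 1))
    (hpiece : IncreasingLipschitzOnPieces f S lam) {a x : ℝ} (ha : 0 ≤ a) (hx : x < 1) {n : ℕ}
    (hgap : ∀ w ∈ Ioc a x, ∀ j < n, f^[j] w ∉ S) {i : ℕ} (hi : i ≤ n) :
    ∀ y ∈ Icc a x, ∀ z ∈ Icc a x, y ≤ z →
      f^[i] y ≤ f^[i] z ∧ f^[i] z - f^[i] y ≤ lam ^ i * (z - y) := by
  induction i with
  | zero => intro y _ z _ hyz; simp [hyz]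
  | succ i ih =>
    have ih := ih (by omega)
    intro y hy z hz hyz
    have hI : ∀ w ∈ Icc a x, w ∈ Ico (0:ℝ) 1 := fun w hw => ⟨ha.trans hw.1, hw.2.trans_lt hx⟩
    obtain ⟨hle, hsub⟩ := ih y hy z hz hyz
    rw [iterate_succ_apply', iterate_succ_apply']
    obtain heq | hlt := hle.eq_or_lt
    · rw [heq, sub_self]
      exact ⟨le_rfl, mul_nonneg (pow_nonneg hlam0 _) (sub_nonneg.2 hyz)⟩
    -- a singular value in `(f^[i] y, f^[i] z]` would be attained on `(y, z] ⊆ (a, x]`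
    have hnoS : ∀ s ∈ S, s ∉ Ioc (f^[i] y) (f^[i] z) := by
      rintro s hs ⟨hys, hsz⟩
      have hcont : ContinuousOn f^[i] (Icc y z) :=
        (continuousOn_of_le_of_sub_le ih).mono (Icc_subset_Icc hy.1 hz.2)
      obtain ⟨u, hu, hus⟩ := intermediate_value_Icc hyz hcont ⟨hys.le, hsz⟩
      have hyu : y < u := hu.1.lt_of_ne (by rintro rfl; exact hys.ne hus)
      exact hgap u ⟨hy.1.trans_lt hyu, hu.2.trans hz.2⟩ i (by omega) (hus ▸ hs)
    obtain ⟨hstep_lt, hstep_le⟩ :=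
      hpiece _ (hmap.iterate i (hI y hy)) _ (hmap.iterate i (hI z hz)) hlt hnoS
    refine ⟨hstep_lt.le, hstep_le.trans ?_⟩
    calc lam * (f^[i] z - f^[i] y) ≤ lam * (lam ^ i * (z - y)) :=
          mul_le_mul_of_nonneg_left hsub hlam0
      _ = lam ^ (i + 1) * (z - y) := by ring

theorem tendsto_dist_iterate_of_gap (hlam0 : 0 ≤ lam) (hlam1 : lam < 1)
    (hmap : MapsTo f (Ico 0 1) (Ico 0 1)) (hpiece : IncreasingLipschitzOnPieces f S lam)
    {a x : ℝ} (ha : 0 ≤ a) (hax : a ≤ x) (hx : x < 1) {p : ℕ} (hp : 0 < p)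
    (hxp : IsPeriodicPt f p x) (hgap : ∀ w ∈ Ioc a x, ∀ j < p, f^[j] w ∉ S) :
    Tendsto (fun n => dist (f^[n] a) (f^[n] x)) atTop (𝓝 0) := by
  have hlip := fun i (hi : i ≤ p) =>
    iterate_le_and_sub_le_of_gap hlam0 hmap hpiece ha hx hgap hi
  have hx' : x ∈ Icc a x := ⟨hax, le_rfl⟩
  -- `f^[p]` maps `[a, x]` into itself and contracts it towards its fixed point `x`
  have hreturn : ∀ q,
      (f^[p])^[q] a ∈ Icc a x ∧ x - (f^[p])^[q] a ≤ lam ^ (p * q) * (x - a) := by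
    intro q
    induction q with
    | zero => simp [hax]
    | succ q ih =>
      obtain ⟨hb, hdist⟩ := ih
      obtain ⟨hle, hsub⟩ := hlip p le_rfl _ hb x hx' hb.2
      rw [hxp.eq] at hle hsub
      have hlp : lam ^ p ≤ 1 := pow_le_one₀ hlam0 hlam1.le
      rw [iterate_succ_apply']
      refine ⟨⟨?_, hle⟩, ?_⟩
      · nlinarith [hb.1, hb.2]
      · calc x - f^[p] ((f^[p])^[q] a) ≤ lam ^ p * (x - (f^[p])^[q] a) := hsub
          _ ≤ lam ^ p * (lam ^ (p * q) * (x - a)) :=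
            mul_le_mul_of_nonneg_left hdist (pow_nonneg hlam0 p)
          _ = lam ^ (p * (q + 1)) * (x - a) := by ring
  have hbound : ∀ n, dist (f^[n] a) (f^[n] x) ≤ lam ^ n * (x - a) := by
    intro n
    obtain ⟨q, r, hr, rfl⟩ : ∃ q r, r < p ∧ n = r + p * q :=
      ⟨n / p, n % p, Nat.mod_lt n hp, (Nat.mod_add_div n p).symm⟩
    obtain ⟨hb, hdist⟩ := hreturn q
    rw [← iterate_mul] at hb hdist
    obtain ⟨hle, hsub⟩ := hlip r hr.le _ hb x hx' hb.2
    rw [iterate_add_apply, iterate_add_apply f r _ x, (hxp.mul_const q).eq, dist_comm,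
      Real.dist_eq, abs_of_nonneg (sub_nonneg.2 hle)]
    calc f^[r] x - f^[r] (f^[p * q] a) ≤ lam ^ r * (x - f^[p * q] a) := hsub
      _ ≤ lam ^ r * (lam ^ (p * q) * (x - a)) :=
        mul_le_mul_of_nonneg_left hdist (pow_nonneg hlam0 r)
      _ = lam ^ (r + p * q) * (x - a) := by ring
  exact squeeze_zero (fun n => dist_nonneg) hbound
    (by simpa using (tendsto_pow_atTop_nhds_zero_of_lt_one hlam0 hlam1).mul_const (x - a))

theorem exists_mem_omegaSet_eq_range (hlam0 : 0 ≤ lam) (hlam1 : lam < 1) (hSfin : S.Finite)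
    (hS0 : (0:ℝ) ∈ S) (hmap : MapsTo f (Ico 0 1) (Ico 0 1))
    (hpiece : IncreasingLipschitzOnPieces f S lam) {x : ℝ} (hx : x ∈ Ico (0:ℝ) 1) {p : ℕ}
    (hp : 0 < p) (hxp : IsPeriodicPt f p x) :
    ∃ s ∈ S, omegaSet f s = range fun m => f^[m] x := by
  obtain ⟨a, ⟨ha, hax⟩, ⟨j, -, hjS⟩, hgap⟩ := exists_singular_gap hSfin hS0 hmap
    hpiece.strictMonoOnPieces hx hp
  refine ⟨f^[j] a, hjS, ?_⟩
  rw [omegaSet_iterate]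
  exact omegaSet_eq_range_of_tendsto_dist hp hxp
    (tendsto_dist_iterate_of_gap hlam0 hlam1 hmap hpiece ha hax hx.2 hp hxp hgap)

end PiecewiseContraction

theorem stmt_4_general (f : ℝ → ℝ) (S : Set ℝ) (lam : ℝ)
    (hlam0 : 0 < lam) (hlam1 : lam < 1)
    (hSfin : S.Finite) (hS0 : (0:ℝ) ∈ S)
    (hmap : Set.MapsTo f (Set.Ico 0 1) (Set.Ico 0 1))
    (hpiece : ∀ x ∈ Set.Ico (0:ℝ) 1, ∀ y ∈ Set.Ico (0:ℝ) 1, x < y →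
      (∀ s ∈ S, s ∉ Set.Ioc x y) → f x < f y ∧ f y - f x ≤ lam * (y - x)) :
    (∃ ψ : ℝ → ℝ,
      (∀ x ∈ Set.Ico (0:ℝ) 1, (∃ p, 1 ≤ p ∧ f^[p] x = x) → ψ x ∈ S) ∧
      (∀ x ∈ Set.Ico (0:ℝ) 1, ∀ y ∈ Set.Ico (0:ℝ) 1,
        (∃ p, 1 ≤ p ∧ f^[p] x = x) → (∃ p, 1 ≤ p ∧ f^[p] y = y) →
        (omegaSet f (ψ x) = omegaSet f (ψ y) ↔
          Set.range (fun m => f^[m] x) = Set.range (fun m => f^[m] y)))) ∧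
    {O : Set ℝ | ∃ x, x ∈ Set.Ico (0:ℝ) 1 ∧ (∃ p, 1 ≤ p ∧ f^[p] x = x) ∧
        O = Set.range fun m => f^[m] x}.Finite ∧
    {O : Set ℝ | ∃ x, x ∈ Set.Ico (0:ℝ) 1 ∧ (∃ p, 1 ≤ p ∧ f^[p] x = x) ∧
        O = Set.range fun m => f^[m] x}.ncard ≤ (omegaSet f '' S).ncard := by
  have key : ∀ x ∈ Ico (0:ℝ) 1, (∃ p, 1 ≤ p ∧ f^[p] x = x) →
      ∃ s ∈ S, omegaSet f s = range fun m => f^[m] x := fun x hx ⟨p, hp, hxp⟩ =>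
    exists_mem_omegaSet_eq_range hlam0.le hlam1 hSfin hS0 hmap hpiece hx hp hxp
  choose! ψ hψS hψω using key
  have horbits : {O : Set ℝ | ∃ x, x ∈ Ico (0:ℝ) 1 ∧ (∃ p, 1 ≤ p ∧ f^[p] x = x) ∧
      O = range fun m => f^[m] x} ⊆ omegaSet f '' S := by
    rintro O ⟨x, hx, hxper, rfl⟩
    exact ⟨ψ x, hψS x hx hxper, hψω x hx hxper⟩
  refine ⟨⟨ψ, hψS, fun x hx y hy hxper hyper => ?_⟩, (hSfin.image _).subset horbits,
    ncard_le_ncard horbits (hSfin.image _)⟩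
  rw [hψω x hx hxper, hψω y hy hyper]

/-- For a piecewise increasing contraction `f` with nonempty set of
periodic points, there is a map `ψ` from periodic points to the singular set `S` such
that `ψ x` and `ψ y` lie in the same class of the relation `s ~ t ↔ ω(f,s) = ω(f,t)`
iff `x` and `y` lie on the same periodic orbit.  In particular the number of periodic
orbits is at most `#A(f) = #(ω-image of S)`. -/
theorem stmt_4 (f : ℝ → ℝ) (S : Set ℝ) (lam : ℝ)
    (hlam0 : 0 < lam) (hlam1 : lam < 1)
    (hSfin : S.Finite) (hS0 : (0:ℝ) ∈ S) (hSsub : S ⊆ Set.Ico 0 1)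
    (hmap : Set.MapsTo f (Set.Ico 0 1) (Set.Ico 0 1))
    (hrc : ∀ x ∈ Set.Ico (0:ℝ) 1, ContinuousWithinAt f (Set.Ici x) x)
    (hpiece : ∀ x ∈ Set.Ico (0:ℝ) 1, ∀ y ∈ Set.Ico (0:ℝ) 1, x < y →
      (∀ s ∈ S, s ∉ Set.Ioc x y) → f x < f y ∧ f y - f x ≤ lam * (y - x))
    (hper : ∃ x ∈ Set.Ico (0:ℝ) 1, ∃ p, 1 ≤ p ∧ f^[p] x = x) :
    (∃ ψ : ℝ → ℝ,
      (∀ x ∈ Set.Ico (0:ℝ) 1, (∃ p, 1 ≤ p ∧ f^[p] x = x) → ψ x ∈ S) ∧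
      (∀ x ∈ Set.Ico (0:ℝ) 1, ∀ y ∈ Set.Ico (0:ℝ) 1,
        (∃ p, 1 ≤ p ∧ f^[p] x = x) → (∃ p, 1 ≤ p ∧ f^[p] y = y) →
        (omegaSet f (ψ x) = omegaSet f (ψ y) ↔
          Set.range (fun m => f^[m] x) = Set.range (fun m => f^[m] y)))) ∧
    {O : Set ℝ | ∃ x, x ∈ Set.Ico (0:ℝ) 1 ∧ (∃ p, 1 ≤ p ∧ f^[p] x = x) ∧
        O = Set.range fun m => f^[m] x}.Finite ∧
    {O : Set ℝ | ∃ x, x ∈ Set.Ico (0:ℝ) 1 ∧ (∃ p, 1 ≤ p ∧ f^[p] x = x) ∧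
        O = Set.range fun m => f^[m] x}.ncard ≤ (omegaSet f '' S).ncard :=
  stmt_4_general f S lam hlam0 hlam1 hSfin hS0 hmap hpiece
end

section
/- Let f be an orientation-preserving piecewise contraction of the circle ℝ/ℤ with k discontinuity points, right continuous at each of them. Then f has at most k periodic orbits. -/
/-!
Work with the lift `F`. Call `(a, b]` jump-free if it contains no integer translate of a
discontinuity; there `F` is increasing and `lam`-Lipschitz. Fix a periodic point `x`, and let `σ`
be the supremum of the `b > x` for which all the intervals `(Fⁿ x, Fⁿ b]` are jump-free. Because
the orbit of `x` is finite modulo `ℤ`, contraction takes care of all large `n`, and right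
continuity of the finitely many remaining iterates shows that this condition is open in `b`; so it
fails at `σ`. At the first time `n` it fails, `(Fⁿ x, Fⁿ σ]` contains a translate `d + p` of a
discontinuity, and by the intermediate value theorem every point just left of `d + p` is `Fⁿ b`
for some `b < σ`, hence is asymptotic to the orbit of `x`. Thus every periodic orbit attracts the
left side of some discontinuity. Two periodic orbits attracting the same side are asymptotic
modulo `ℤ`, and sampling along a common period shows that they share a point, so they coincide.
-/

open Set Filter Topology Function

namespace CirclePiecewiseContraction

def JumpFree (D : Set ℝ) (a b : ℝ) : Prop := ∀ d ∈ D, ∀ p : ℤ, d + p ∉ Ioc a b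

def OrbitJumpFree (F : ℝ → ℝ) (D : Set ℝ) (a b : ℝ) : Prop :=
  ∀ n, JumpFree D (F^[n] a) (F^[n] b)

def AttractsLeftOf (F : ℝ → ℝ) (x d : ℝ) : Prop :=
  ∀ᶠ s in 𝓝[<] d, ∃ q : ℤ, ∃ n, Tendsto (fun j => F^[j] (s + q) - F^[j + n] x) atTop (𝓝 0)

section JumpFree

variable {D : Set ℝ} {a b : ℝ}

theorem JumpFree.mono {a' b' : ℝ} (h : JumpFree D a b) (ha : a ≤ a') (hb : b' ≤ b) :
    JumpFree D a' b' :=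
  fun d hd p hp => h d hd p ⟨ha.trans_lt hp.1, hp.2.trans hb⟩

theorem JumpFree.trans {c : ℝ} (hab : JumpFree D a b) (hbc : JumpFree D b c) :
    JumpFree D a c := by
  intro d hd p hp
  rcases le_or_gt (d + p) b with h | h
  · exact hab d hd p ⟨hp.1, h⟩
  · exact hbc d hd p ⟨h, hp.2⟩

theorem JumpFree.add_intCast (h : JumpFree D a b) (q : ℤ) : JumpFree D (a + q) (b + q) := by
  intro d hd p hp
  refine h d hd (p - q) ⟨?_, ?_⟩ <;> push_cast <;> linarith [hp.1, hp.2]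

theorem JumpFree.lt_add_one (h : JumpFree D a b) (hD : D.Nonempty) : b < a + 1 := by
  obtain ⟨d, hd⟩ := hD
  by_contra! hb
  refine h d hd (⌊a - d⌋ + 1) ⟨?_, ?_⟩ <;> push_cast
  · linarith [Int.lt_floor_add_one (a - d)]
  · linarith [Int.floor_le (a - d)]

theorem eventually_jumpFree_nhdsGT (hD : D.Finite) (a : ℝ) :
    ∀ᶠ b in 𝓝[>] a, JumpFree D a b := by
  refine (eventually_all_finite hD).2 fun d _ => ?_
  have ha : a < d + (⌊a - d⌋ + 1 : ℤ) := by push_cast; linarith [Int.lt_floor_add_one (a - d)]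
  filter_upwards [Ioo_mem_nhdsGT ha] with b hb p hp
  have : ((⌊a - d⌋ + 1 : ℤ) : ℝ) ≤ p := by
    exact_mod_cast Int.floor_lt.2 (show a - d < p by linarith [hp.1])
  linarith [hp.2, hb.2]

end JumpFree

section Lift

variable {F f : ℝ → ℝ} {m : ℤ} (hFper : ∀ x, F (x + 1) = F x + m)
include hFper

theorem add_intCast (u : ℝ) (c : ℤ) : F (u + c) = F u + ↑(c * m) := by
  induction c using Int.induction_on with
  | zero => simp
  | succ n ih => rw [Int.cast_add, Int.cast_one, ← add_assoc, hFper, ih]; push_cast; ring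
  | pred n ih =>
    have h := hFper (u + ↑(-(n : ℤ) - 1))
    rw [add_assoc, Int.cast_sub, Int.cast_one, sub_add_cancel, ih] at h
    push_cast at h ⊢
    linarith

theorem iterate_add_intCast (n : ℕ) (u : ℝ) (c : ℤ) :
    F^[n] (u + c) = F^[n] u + ↑(c * m ^ n) := by
  induction n generalizing u c with
  | zero => simp
  | succ n ih => rw [iterate_succ_apply, iterate_succ_apply, add_intCast hFper, ih, pow_succ',
      mul_assoc]

variable (hf : ∀ x, f x = Int.fract (F x))
include hf

theorem iterate_fract (n : ℕ) (u : ℝ) : f^[n] (Int.fract u) = Int.fract (F^[n] u) := by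
  induction n generalizing u with
  | zero => rfl
  | succ n ih =>
    have hstep : f (Int.fract u) = Int.fract (F u) := by
      rw [hf, ← Int.self_sub_floor u, sub_eq_add_neg, ← Int.cast_neg, add_intCast hFper,
        Int.fract_add_intCast]
    rw [iterate_succ_apply, iterate_succ_apply, hstep, ih]

theorem iterate_eq_fract {x : ℝ} (hx : x ∈ Ico (0 : ℝ) 1) (n : ℕ) :
    f^[n] x = Int.fract (F^[n] x) := by
  rw [← iterate_fract hFper hf, Int.fract_eq_self.2 hx]

end Lift

section Piecewise

variable {D : Set ℝ} {lam : ℝ} {F : ℝ → ℝ}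
  (hFpiece : ∀ x y, x < y → JumpFree D x y → F x < F y ∧ F y - F x ≤ lam * (y - x))
include hFpiece

theorem le_and_sub_le_of_jumpFree {a b : ℝ} (h : JumpFree D a b) (hab : a ≤ b) :
    F a ≤ F b ∧ F b - F a ≤ lam * (b - a) := by
  rcases hab.eq_or_lt with rfl | hab
  · simp
  · exact (hFpiece a b hab h).imp_left le_of_lt

theorem monotoneOn_of_jumpFree {a b : ℝ} (h : JumpFree D a b) : MonotoneOn F (Icc a b) :=
  fun _ hx _ hy hxy => (le_and_sub_le_of_jumpFree hFpiece (h.mono hx.1 hy.2) hxy).1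

theorem continuousOn_of_jumpFree (hlam : 0 ≤ lam) {a b : ℝ} (h : JumpFree D a b) :
    ContinuousOn F (Icc a b) := by
  refine (LipschitzOnWith.of_dist_le_mul (K := lam.toNNReal) fun x hx y hy => ?_).continuousOn
  wlog hxy : x ≤ y generalizing x y
  · rw [dist_comm, dist_comm x]
    exact this y hy x hx (le_of_not_ge hxy)
  obtain ⟨hle, hsub⟩ := le_and_sub_le_of_jumpFree hFpiece (h.mono hx.1 hy.2) hxy
  rwa [Real.dist_eq, Real.dist_eq, abs_sub_comm, abs_of_nonneg (sub_nonneg.2 hle), abs_sub_comm,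
    abs_of_nonneg (sub_nonneg.2 hxy), Real.coe_toNNReal _ hlam]

variable {a b c : ℝ} {n : ℕ}

theorem iterate_mem_Icc (h : ∀ j < n, JumpFree D (F^[j] a) (F^[j] c)) (hb : b ∈ Icc a c) :
    F^[n] b ∈ Icc (F^[n] a) (F^[n] c) := by
  induction n with
  | zero => exact hb
  | succ n ih =>
    have hn := ih fun j hj => h j (Nat.lt_succ_of_lt hj)
    have hmono := monotoneOn_of_jumpFree hFpiece (h n n.lt_succ_self)
    have hac := hn.1.trans hn.2
    simp only [iterate_succ_apply']
    exact ⟨hmono (left_mem_Icc.2 hac) hn hn.1, hmono hn (right_mem_Icc.2 hac) hn.2⟩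

theorem continuousOn_iterate (hlam : 0 ≤ lam) (h : ∀ j < n, JumpFree D (F^[j] a) (F^[j] c)) :
    ContinuousOn F^[n] (Icc a c) := by
  induction n with
  | zero => exact continuousOn_id
  | succ n ih =>
    have h' : ∀ j < n, JumpFree D (F^[j] a) (F^[j] c) := fun j hj => h j (Nat.lt_succ_of_lt hj)
    rw [iterate_succ']
    exact (continuousOn_of_jumpFree hFpiece hlam (h n n.lt_succ_self)).comp (ih h')
      fun _ hb => iterate_mem_Icc hFpiece h' hb

theorem iterate_lt_and_sub_le (hlam : 0 ≤ lam) (hab : a < b)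
    (h : ∀ j < n, JumpFree D (F^[j] a) (F^[j] b)) :
    F^[n] a < F^[n] b ∧ F^[n] b - F^[n] a ≤ lam ^ n * (b - a) := by
  induction n with
  | zero => simpa using hab
  | succ n ih =>
    obtain ⟨hlt, hle⟩ := ih fun j hj => h j (Nat.lt_succ_of_lt hj)
    obtain ⟨hlt', hle'⟩ := hFpiece _ _ hlt (h n n.lt_succ_self)
    simp only [iterate_succ_apply']
    refine ⟨hlt', hle'.trans ?_⟩
    calc lam * (F^[n] b - F^[n] a) ≤ lam * (lam ^ n * (b - a)) :=
          mul_le_mul_of_nonneg_left hle hlam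
      _ = lam ^ (n + 1) * (b - a) := by ring

theorem OrbitJumpFree.mono_right (h : OrbitJumpFree F D a c) (hb : b ∈ Icc a c) :
    OrbitJumpFree F D a b :=
  fun n => (h n).mono le_rfl (iterate_mem_Icc hFpiece (fun j _ => h j) hb).2

theorem OrbitJumpFree.tendsto_iterate_sub (hlam0 : 0 ≤ lam) (hlam1 : lam < 1)
    (h : OrbitJumpFree F D a b) (hab : a < b) :
    Tendsto (fun n => F^[n] b - F^[n] a) atTop (𝓝 0) := by
  have hpow := (tendsto_pow_atTop_nhds_zero_of_lt_one hlam0 hlam1).mul_const (b - a)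
  rw [zero_mul] at hpow
  have hbound := fun n => iterate_lt_and_sub_le (n := n) hFpiece hlam0 hab fun j _ => h j
  exact squeeze_zero (fun n => sub_nonneg.2 (hbound n).1.le) (fun n => (hbound n).2) hpow

theorem orbitJumpFree_of_forall_lt (hlam0 : 0 ≤ lam) (hlam1 : lam < 1) {ρ : ℝ} {N : ℕ}
    (hab : a < b) (hρ : ∀ n, JumpFree D (F^[n] a) (F^[n] a + ρ)) (hN : lam ^ N * (b - a) ≤ ρ)
    (h : ∀ n < N, JumpFree D (F^[n] a) (F^[n] b)) : OrbitJumpFree F D a b := by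
  intro n
  induction n using Nat.strong_induction_on with
  | _ n ih =>
    by_cases hn : n < N
    · exact h n hn
    have hsub := (iterate_lt_and_sub_le hFpiece hlam0 hab ih).2
    have hpow : lam ^ n ≤ lam ^ N := pow_le_pow_of_le_one hlam0 hlam1.le (not_lt.1 hn)
    refine (hρ n).mono le_rfl ?_
    calc F^[n] b ≤ F^[n] a + lam ^ n * (b - a) := by linarith
      _ ≤ F^[n] a + lam ^ N * (b - a) := by gcongr
      _ ≤ F^[n] a + ρ := by linarith

end Piecewise

section Attraction

variable {D : Set ℝ} {lam : ℝ} {F : ℝ → ℝ} (hlam0 : 0 ≤ lam) (hlam1 : lam < 1)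
  (hFrc : ∀ x, ContinuousWithinAt F (Ici x) x)
  (hFpiece : ∀ x y, x < y → JumpFree D x y → F x < F y ∧ F y - F x ≤ lam * (y - x))
  (hD : D.Finite)

include hFrc hFpiece hD in
theorem tendsto_iterate_nhdsGT (n : ℕ) (u : ℝ) : Tendsto F^[n] (𝓝[>] u) (𝓝[>] (F^[n] u)) := by
  have hF : ∀ u, Tendsto F (𝓝[>] u) (𝓝[>] (F u)) := fun u =>
    tendsto_nhdsWithin_iff.2 ⟨(hFrc u).mono_left (nhdsWithin_mono u Ioi_subset_Ici_self),
      by filter_upwards [eventually_jumpFree_nhdsGT hD u, self_mem_nhdsWithin] with v hv huv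
         exact (hFpiece u v huv hv).1⟩
  induction n generalizing u with
  | zero => exact tendsto_id
  | succ n ih => exact (ih (F u)).comp (hF u)

include hlam0 hlam1 hFrc hFpiece hD in
/-- Openness in `b`: the first `N` iterates are handled by right continuity, the rest by
contraction into the uniform jump-free radius `ρ` around the orbit of `a`. -/
theorem OrbitJumpFree.eventually_nhdsGT {a b ρ : ℝ} (hρ : 0 < ρ)
    (hρa : ∀ n, JumpFree D (F^[n] a) (F^[n] a + ρ)) (hab : a < b) (h : OrbitJumpFree F D a b) :
    ∀ᶠ b' in 𝓝[>] b, OrbitJumpFree F D a b' := by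
  obtain ⟨N, hN⟩ := exists_pow_lt_of_lt_one (div_pos hρ (by linarith : 0 < b + 1 - a)) hlam1
  have hNρ : lam ^ N * (b + 1 - a) ≤ ρ := by
    rw [lt_div_iff₀ (by linarith)] at hN
    exact hN.le
  have hfirst : ∀ᶠ b' in 𝓝[>] b, ∀ n ∈ Finset.range N, JumpFree D (F^[n] b) (F^[n] b') :=
    eventually_all_finset _ |>.2 fun n _ =>
      (tendsto_iterate_nhdsGT hFrc hFpiece hD n b).eventually (eventually_jumpFree_nhdsGT hD _)
  filter_upwards [hfirst, Ioo_mem_nhdsGT (lt_add_one b)] with b' hb' hbb'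
  refine orbitJumpFree_of_forall_lt hFpiece hlam0 hlam1 (hab.trans hbb'.1) hρa ?_
    fun n hn => (h n).trans (hb' n (Finset.mem_range.2 hn))
  exact (mul_le_mul_of_nonneg_left (by linarith [hbb'.2]) (pow_nonneg hlam0 N)).trans hNρ

include hlam0 hlam1 hFpiece in
/-- Points just left of `d + p` are `Fⁿ b` with `a < b < σ`, by the intermediate value
theorem. -/
theorem attractsLeftOf_of_first_jump {a σ d : ℝ} {p : ℤ} {n : ℕ} (haσ : a ≤ σ)
    (hB : ∀ b ∈ Ioo a σ, OrbitJumpFree F D a b) (hlt : ∀ j < n, JumpFree D (F^[j] a) (F^[j] σ))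
    (hp : d + p ∈ Ioc (F^[n] a) (F^[n] σ)) : AttractsLeftOf F a d := by
  filter_upwards [Ioo_mem_nhdsLT (show d - (d + p - F^[n] a) < d by linarith [hp.1])] with s hs
  obtain ⟨b, hb, hbs⟩ := intermediate_value_Icc haσ (continuousOn_iterate hFpiece hlam0 hlt)
    ⟨(by linarith [hs.1] : F^[n] a ≤ s + p), by linarith [hs.2, hp.2]⟩
  have hab : a < b := hb.1.lt_of_ne (by rintro rfl; linarith [hs.1])
  have hbσ : b < σ := hb.2.lt_of_ne (by rintro rfl; linarith [hs.2, hp.2])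
  refine ⟨p, n, ?_⟩
  simpa only [← hbs, ← iterate_add_apply, comp_def] using
    ((hB b ⟨hab, hbσ⟩).tendsto_iterate_sub hFpiece hlam0 hlam1 hab).comp (tendsto_add_atTop_nat n)

include hlam0 hlam1 hFrc hFpiece hD in
theorem exists_attractsLeftOf (hDne : D.Nonempty) {a ρ : ℝ} (hρ : 0 < ρ)
    (hρa : ∀ n, JumpFree D (F^[n] a) (F^[n] a + ρ)) : ∃ d ∈ D, AttractsLeftOf F a d := by
  classical
  set B := {b | a < b ∧ OrbitJumpFree F D a b}
  have hρB : a + ρ ∈ B := ⟨by linarith, orbitJumpFree_of_forall_lt hFpiece hlam0 hlam1 (N := 0)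
    (by linarith) hρa (by simp) (by simp)⟩
  have hbdd : BddAbove B := ⟨a + 1, fun b hb => ((hb.2 0).lt_add_one hDne).le⟩
  set σ := sSup B
  have haσ : a < σ := (lt_add_of_pos_right a hρ).trans_le (le_csSup hbdd hρB)
  have hσB : σ ∉ B := fun hσ => by
    obtain ⟨b, hb, hσb⟩ := ((hσ.2.eventually_nhdsGT hlam0 hlam1 hFrc hFpiece hD hρ hρa hσ.1).and
      self_mem_nhdsWithin).exists
    exact (le_csSup hbdd ⟨haσ.trans hσb, hb⟩).not_gt hσb
  have hB : ∀ b ∈ Ioo a σ, OrbitJumpFree F D a b := fun b hb => by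
    obtain ⟨b', hb', hbb'⟩ := exists_lt_of_lt_csSup ⟨_, hρB⟩ hb.2
    exact hb'.2.mono_right hFpiece ⟨hb.1.le, hbb'.le⟩
  have hex : ∃ n, ¬JumpFree D (F^[n] a) (F^[n] σ) := by
    by_contra! h
    exact hσB ⟨haσ, h⟩
  obtain ⟨d, hd, p, hp⟩ :
      ∃ d ∈ D, ∃ p : ℤ, d + p ∈ Ioc (F^[Nat.find hex] a) (F^[Nat.find hex] σ) := by
    simpa [JumpFree] using Nat.find_spec hex
  exact ⟨d, hd, attractsLeftOf_of_first_jump hlam0 hlam1 hFpiece haσ.le hB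
    (fun j hj => not_not.1 (Nat.find_min hex hj)) hp⟩

end Attraction

section Periodic

theorem finite_range_iterate {α : Type*} {f : α → α} {x : α} {p : ℕ} (hpx : IsPeriodicPt f p x)
    (hp : 0 < p) : (range fun n => f^[n] x).Finite := by
  refine ((finite_Iio p).image fun n => f^[n] x).subset ?_
  rintro _ ⟨n, rfl⟩
  exact ⟨n % p, Nat.mod_lt n hp, hpx.iterate_mod_apply n⟩

theorem range_iterate_apply_iterate {α : Type*} {f : α → α} {x : α} {p : ℕ}
    (hpx : IsPeriodicPt f p x) (hp : 0 < p) (i : ℕ) :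
    (range fun n => f^[n] (f^[i] x)) = range fun n => f^[n] x := by
  refine (range_subset_iff.2 fun n => mem_range.2 ⟨n + i, iterate_add_apply f n i x⟩).antisymm ?_
  rintro _ ⟨n, rfl⟩
  refine ⟨n + (p * i - i), show f^[n + (p * i - i)] (f^[i] x) = f^[n] x from ?_⟩
  have hi : i ≤ p * i := Nat.le_mul_of_pos_left i hp
  rw [← iterate_add_apply, add_assoc, Nat.sub_add_cancel hi, iterate_add_apply,
    (hpx.mul_const i).eq]

theorem range_iterate_eq_of_iterate_eq {α : Type*} {f : α → α} {x y : α} {p q i j : ℕ}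
    (hpx : IsPeriodicPt f p x) (hp : 0 < p) (hqy : IsPeriodicPt f q y) (hq : 0 < q)
    (h : f^[i] x = f^[j] y) : (range fun n => f^[n] x) = range fun n => f^[n] y := by
  rw [← range_iterate_apply_iterate hpx hp i, ← range_iterate_apply_iterate hqy hq j, h]

theorem eq_zero_of_tendsto_add_intCast {v : ℝ} {z : ℕ → ℤ} (hv : |v| < 1)
    (h : Tendsto (fun t => v + z t) atTop (𝓝 0)) : v = 0 := by
  have hz : Tendsto (fun t => (z t : ℝ)) atTop (𝓝 (-v)) := by
    simpa using h.const_add (-v)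
  obtain ⟨c, hc⟩ := Int.isClosedEmbedding_coe_real.isClosed_range.mem_of_tendsto hz
    (Eventually.of_forall fun t => mem_range_self (z t))
  have hc0 : |c| < 1 := by exact_mod_cast (show |(c : ℝ)| < 1 by rwa [hc, abs_neg])
  rw [Int.abs_lt_one_iff.1 hc0, Int.cast_zero] at hc
  linarith

variable {D : Set ℝ} {lam : ℝ} {F f : ℝ → ℝ} {m : ℤ} (hFper : ∀ x, F (x + 1) = F x + m)
  (hf : ∀ x, f x = Int.fract (F x))

include hFper hf in
/-- The orbit of `x` is finite modulo `ℤ`, so one radius works along all of it. -/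
theorem exists_forall_jumpFree_add (hD : D.Finite) {x : ℝ} {p : ℕ} (hx : x ∈ Ico (0 : ℝ) 1)
    (hpx : IsPeriodicPt f p x) (hp : 0 < p) :
    ∃ ρ > 0, ∀ n, JumpFree D (F^[n] x) (F^[n] x + ρ) := by
  have hev : ∀ᶠ r in 𝓝[>] 0, ∀ z ∈ range (fun n => f^[n] x), JumpFree D z (z + r) :=
    (eventually_all_finite (finite_range_iterate hpx hp)).2 fun z _ =>
      eventually_map.1 <| by
        rw [map_add_left_nhdsGT, add_zero]
        exact eventually_jumpFree_nhdsGT hD z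
  obtain ⟨ρ, hρ, hρ0⟩ := (hev.and self_mem_nhdsWithin).exists
  refine ⟨ρ, hρ0, fun n => ?_⟩
  have h := (hρ (f^[n] x) ⟨n, rfl⟩).add_intCast ⌊F^[n] x⌋
  rwa [iterate_eq_fract hFper hf hx, add_right_comm, Int.fract_add_floor] at h

include hFper hf in
theorem iterate_add_eq_add_floor {x : ℝ} {r : ℕ} (hx : x ∈ Ico (0 : ℝ) 1)
    (hrx : IsPeriodicPt f r x) (n : ℕ) : F^[r + n] x = f^[n] x + ⌊F^[r + n] x⌋ := by
  have h := Int.fract_add_floor (F^[r + n] x)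
  rw [← iterate_eq_fract hFper hf hx, iterate_add_apply, (hrx.apply_iterate n).eq] at h
  exact h.symm

include hFper hf in
theorem exists_iterate_eq_of_attractsLeftOf {x y d : ℝ} {p q : ℕ} (hx : x ∈ Ico (0 : ℝ) 1)
    (hy : y ∈ Ico (0 : ℝ) 1) (hpx : IsPeriodicPt f p x) (hp : 0 < p) (hqy : IsPeriodicPt f q y)
    (hq : 0 < q) (hxd : AttractsLeftOf F x d) (hyd : AttractsLeftOf F y d) :
    ∃ i j, f^[i] x = f^[j] y := by
  obtain ⟨s, ⟨q₁, i, hi⟩, ⟨q₂, j, hj⟩⟩ := (hxd.and hyd).exists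
  have hP : Tendsto (fun t : ℕ => (p * q) • t) atTop atTop :=
    tendsto_id.nsmul_atTop (Nat.mul_pos hp hq)
  have hlim := ((hj.comp hP).sub (hi.comp hP)).congr fun t => show _ = f^[i] x - f^[j] y +
      ↑(⌊F^[p * q * t + i] x⌋ - ⌊F^[p * q * t + j] y⌋ + (q₂ - q₁) * m ^ (p * q * t)) by
    have hs := iterate_add_intCast hFper (p * q * t) (s + q₁) (q₂ - q₁)
    rw [Int.cast_sub, add_add_sub_cancel] at hs
    simp only [comp_apply, smul_eq_mul]
    push_cast at hs ⊢
    linarith [iterate_add_eq_add_floor hFper hf hx ((hpx.mul_const q).mul_const t) i,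
      iterate_add_eq_add_floor hFper hf hy ((hqy.const_mul p).mul_const t) j]
  refine ⟨i, j, sub_eq_zero.1 (eq_zero_of_tendsto_add_intCast ?_ (sub_zero (0 : ℝ) ▸ hlim))⟩
  rw [iterate_eq_fract hFper hf hx, iterate_eq_fract hFper hf hy, abs_sub_lt_iff]
  constructor <;> linarith [Int.fract_nonneg (F^[i] x), Int.fract_lt_one (F^[i] x),
    Int.fract_nonneg (F^[j] y), Int.fract_lt_one (F^[j] y)]

end Periodic

/-- `F 1 - F 0 = m` is an integer, so `F` cannot contract all of `[0, 1]`. -/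
theorem nonempty_of_lt_one {D : Set ℝ} {lam : ℝ} {F : ℝ → ℝ} {m : ℤ}
    (hFper : ∀ x, F (x + 1) = F x + m)
    (hFpiece : ∀ x y, x < y → JumpFree D x y → F x < F y ∧ F y - F x ≤ lam * (y - x))
    (hlam1 : lam < 1) : D.Nonempty := by
  rw [nonempty_iff_ne_empty]
  rintro rfl
  obtain ⟨hlt, hle⟩ := hFpiece 0 1 one_pos fun _ hd => hd.elim
  have h1 := hFper 0
  rw [zero_add] at h1
  have hm0 : (0 : ℤ) < m := by exact_mod_cast (show (0 : ℝ) < m by linarith)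
  have hm1 : m < 1 := by exact_mod_cast (show (m : ℝ) < 1 by linarith)
  omega

end CirclePiecewiseContraction

open CirclePiecewiseContraction

theorem stmt_5_general (k : ℕ) (lam : ℝ) (hlam0 : 0 < lam) (hlam1 : lam < 1)
    (D : Set ℝ) (hDfin : D.Finite) (hDcard : D.ncard = k)
    (F : ℝ → ℝ) (m : ℤ) (hFper : ∀ x, F (x + 1) = F x + m)
    (hFrc : ∀ x, ContinuousWithinAt F (Set.Ici x) x)
    (hFpiece : ∀ x y : ℝ, x < y → (∀ d ∈ D, ∀ p : ℤ, d + p ∉ Set.Ioc x y) →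
      F x < F y ∧ F y - F x ≤ lam * (y - x))
    (f : ℝ → ℝ) (hf : ∀ x, f x = Int.fract (F x)) :
    {O : Set ℝ | ∃ x, x ∈ Set.Ico (0:ℝ) 1 ∧ (∃ p, 1 ≤ p ∧ f^[p] x = x) ∧
        O = Set.range fun n => f^[n] x}.Finite ∧
    {O : Set ℝ | ∃ x, x ∈ Set.Ico (0:ℝ) 1 ∧ (∃ p, 1 ≤ p ∧ f^[p] x = x) ∧
        O = Set.range fun n => f^[n] x}.ncard ≤ k := by
  set orbits := {O : Set ℝ | ∃ x, x ∈ Set.Ico (0:ℝ) 1 ∧ (∃ p, 1 ≤ p ∧ f^[p] x = x) ∧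
    O = Set.range fun n => f^[n] x}
  have hD := nonempty_of_lt_one hFper hFpiece hlam1
  have hattr : ∀ O ∈ orbits, ∃ d ∈ D, ∃ x ∈ Ico (0 : ℝ) 1, ∃ p, 0 < p ∧ IsPeriodicPt f p x ∧
      O = (range fun n => f^[n] x) ∧ AttractsLeftOf F x d := by
    rintro O ⟨x, hx, ⟨p, hp, hpx⟩, rfl⟩
    obtain ⟨ρ, hρ, hρx⟩ := exists_forall_jumpFree_add hFper hf hDfin hx hpx hp
    obtain ⟨d, hd, hxd⟩ := exists_attractsLeftOf hlam0.le hlam1 hFrc hFpiece hDfin hD hρ hρx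
    exact ⟨d, hd, x, hx, p, hp, hpx, rfl, hxd⟩
  choose! Φ hΦD hΦ using hattr
  have hinj : InjOn Φ orbits := by
    intro O hO O' hO' hΦO
    obtain ⟨x, hx, p, hp, hpx, rfl, hxd⟩ := hΦ O hO
    obtain ⟨y, hy, q, hq, hqy, rfl, hyd⟩ := hΦ O' hO'
    obtain ⟨i, j, hij⟩ :=
      exists_iterate_eq_of_attractsLeftOf hFper hf hx hy hpx hp hqy hq hxd (hΦO ▸ hyd)
    exact range_iterate_eq_of_iterate_eq hpx hp hqy hq hij
  exact ⟨hDfin.of_injOn hΦD hinj, hDcard ▸ ncard_le_ncard_of_injOn Φ hΦD hinj hDfin⟩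

/-- An orientation-preserving piecewise contraction of the circle ℝ/ℤ with
`k` discontinuity points (right continuous at them) has at most `k` periodic orbits.
The circle map is encoded by a lift `F : ℝ → ℝ` with `F (x+1) = F x + m` for a fixed
integer `m`, right continuous, strictly increasing and `λ`-Lipschitz on each connected
component of `ℝ \ (D + ℤ)` where `D ⊆ [0,1)` is the set of discontinuity points on the
circle; the circle map, identified with a map of `[0,1)`, is `f = Int.fract ∘ F`. -/
theorem stmt_5 (k : ℕ) (lam : ℝ) (hlam0 : 0 < lam) (hlam1 : lam < 1)
    (D : Set ℝ) (hDfin : D.Finite) (hDsub : D ⊆ Set.Ico 0 1) (hDcard : D.ncard = k)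
    (F : ℝ → ℝ) (m : ℤ) (hFper : ∀ x, F (x + 1) = F x + m)
    (hFrc : ∀ x, ContinuousWithinAt F (Set.Ici x) x)
    (hFpiece : ∀ x y : ℝ, x < y → (∀ d ∈ D, ∀ p : ℤ, d + p ∉ Set.Ioc x y) →
      F x < F y ∧ F y - F x ≤ lam * (y - x))
    (f : ℝ → ℝ) (hf : ∀ x, f x = Int.fract (F x)) :
    {O : Set ℝ | ∃ x, x ∈ Set.Ico (0:ℝ) 1 ∧ (∃ p, 1 ≤ p ∧ f^[p] x = x) ∧
        O = Set.range fun n => f^[n] x}.Finite ∧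
    {O : Set ℝ | ∃ x, x ∈ Set.Ico (0:ℝ) 1 ∧ (∃ p, 1 ≤ p ∧ f^[p] x = x) ∧
        O = Set.range fun n => f^[n] x}.ncard ≤ k :=
  stmt_5_general k lam hlam0 hlam1 D hDfin hDcard F m hFper hFrc hFpiece f hf
end

section
/- Let 0 < λ < 1, let 0 = a₀ < a₁ < ... < a_{k-1} < a_k = 1, and let b₁,...,b_k ∈ ℝ. Define F : [0,1) → ℝ by F(x) = λx + b_i for x ∈ [a_{i-1}, a_i), and f(x) = F(x) mod 1. Then f has at most k periodic orbits. -/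
/-!
Let `S ⊂ [0,1)` be the finite, `f`-invariant union of finitely many periodic orbits, and for
`u ∈ S` consider the arc of the circle `ℝ/ℤ` from `u` to the next point of `S`. If this arc
contains no breakpoint `a j` (`j < k`), then `f` is one affine map of slope `lam` on it, so the
arc starting at `f u` is at most `lam` times as long. Arc lengths cannot shrink by `lam` all the
way around a cycle, so every periodic orbit has a point whose arc contains a breakpoint. The arcs
are disjoint, hence distinct orbits use distinct breakpoints, and there are at most `k` orbits.
-/

open Set Function

/-- The length `arcDist x y ∈ (0, 1]` of the arc of `ℝ/ℤ` running forward from `x` to `y`;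
in particular `arcDist x x = 1`. -/
noncomputable def arcDist (x y : ℝ) : ℝ := toIocMod zero_lt_one 0 (y - x)

theorem arcDist_eq_iff {x y c : ℝ} :
    arcDist x y = c ↔ c ∈ Ioc 0 1 ∧ ∃ z : ℤ, y - x = c + z := by
  simp [arcDist, toIocMod_eq_iff]

theorem arcDist_mem_Ioc (x y : ℝ) : arcDist x y ∈ Ioc 0 1 :=
  (arcDist_eq_iff.1 rfl).1

theorem arcDist_of_lt {x y : ℝ} (hxy : x < y) (hyx : y - x ≤ 1) : arcDist x y = y - x :=
  arcDist_eq_iff.2 ⟨⟨sub_pos.2 hxy, hyx⟩, 0, by simp⟩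

theorem arcDist_of_le {x y : ℝ} (hyx : y ≤ x) (hxy : x - y < 1) : arcDist x y = 1 - (x - y) :=
  arcDist_eq_iff.2 ⟨⟨by linarith, by linarith⟩, -1, by push_cast; ring⟩

theorem arcDist_fract_fract (x y : ℝ) : arcDist (Int.fract x) (Int.fract y) = arcDist x y := by
  obtain ⟨hc, z, hz⟩ := arcDist_eq_iff.1 (rfl : arcDist x y = _)
  refine arcDist_eq_iff.2 ⟨hc, z + ⌊x⌋ - ⌊y⌋, ?_⟩
  rw [Int.fract, Int.fract]
  push_cast
  linarith

theorem arcDist_add_arcDist {x y t : ℝ} (h : arcDist x y + arcDist y t ≤ 1) :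
    arcDist x t = arcDist x y + arcDist y t := by
  obtain ⟨⟨hc, -⟩, z, hz⟩ := arcDist_eq_iff.1 (rfl : arcDist x y = _)
  obtain ⟨⟨hd, -⟩, w, hw⟩ := arcDist_eq_iff.1 (rfl : arcDist y t = _)
  exact arcDist_eq_iff.2 ⟨⟨by linarith, h⟩, z + w, by push_cast; linarith⟩

theorem arcDist_symm_of_lt_one {x y : ℝ} (h : arcDist x y < 1) :
    arcDist y x = 1 - arcDist x y := by
  obtain ⟨⟨hc, -⟩, z, hz⟩ := arcDist_eq_iff.1 (rfl : arcDist x y = _)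
  exact arcDist_eq_iff.2 ⟨⟨by linarith, by linarith⟩, -z - 1, by push_cast; linarith⟩

theorem eq_of_arcDist_eq_one {x y : ℝ} (hx : x ∈ Ico (0 : ℝ) 1) (hy : y ∈ Ico (0 : ℝ) 1)
    (h : arcDist x y = 1) : x = y := by
  obtain ⟨-, z, hz⟩ := arcDist_eq_iff.1 h
  have hlt : z < 0 := by exact_mod_cast (show (z : ℝ) < 0 by linarith [hx.1, hy.2])
  have hgt : -2 < z := by exact_mod_cast (show (-2 : ℝ) < z by linarith [hx.2, hy.1])
  obtain rfl : z = -1 := by omega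
  push_cast at hz
  linarith

/-- The forward arcs `(u, u']` and `(u', u]` of `ℝ/ℤ` are disjoint. -/
theorem eq_of_arcDist_le_of_arcDist_le {u u' t : ℝ} (hu : u ∈ Ico (0 : ℝ) 1)
    (hu' : u' ∈ Ico (0 : ℝ) 1)
    (ht : arcDist u t ≤ arcDist u u') (ht' : arcDist u' t ≤ arcDist u' u) : u = u' := by
  rcases (arcDist_mem_Ioc u u').2.lt_or_eq with hlt | heq
  · have hpos := (arcDist_mem_Ioc u' t).1
    have hsum : 1 < arcDist u u' + arcDist u' t := by
      by_contra! hle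
      linarith [arcDist_add_arcDist hle]
    linarith [arcDist_symm_of_lt_one hlt]
  · exact eq_of_arcDist_eq_one hu hu' heq

/-- Inserting `u` only makes the infimum range over a nonempty set: `arcDist u u = 1` is the
largest possible value, so `gap S u` is the distance from `u` forward to the next point of `S`. -/
noncomputable def gap (S : Finset ℝ) (u : ℝ) : ℝ :=
  (insert u S).inf' (Finset.insert_nonempty u S) (arcDist u)

theorem gap_le_arcDist {S : Finset ℝ} (u : ℝ) {v : ℝ} (hv : v ∈ S) :
    gap S u ≤ arcDist u v :=
  Finset.inf'_le _ (Finset.mem_insert_of_mem hv)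

theorem gap_pos (S : Finset ℝ) (u : ℝ) : 0 < gap S u :=
  (Finset.lt_inf'_iff _).2 fun v _ => (arcDist_mem_Ioc u v).1

theorem exists_arcDist_eq_gap {S : Finset ℝ} {u : ℝ} (hu : u ∈ S) :
    ∃ v ∈ S, arcDist u v = gap S u := by
  obtain ⟨v, hv, hvu⟩ := Finset.exists_mem_eq_inf' (Finset.insert_nonempty u S) (arcDist u)
  exact ⟨v, Finset.insert_eq_of_mem hu ▸ hv, hvu.symm⟩

theorem Fin.exists_castSucc_le_lt {α : Type*} [LinearOrder α] {k : ℕ} (a : Fin (k + 1) → α)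
    {t : α} (h0 : a 0 ≤ t) (hlast : t < a (Fin.last k)) :
    ∃ i : Fin k, a i.castSucc ≤ t ∧ t < a i.succ := by
  induction k with
  | zero => exact absurd (h0.trans_lt hlast) (lt_irrefl _)
  | succ k ih =>
    by_cases h : t < a (Fin.last k).castSucc
    · obtain ⟨i, hi⟩ := ih (a ∘ Fin.castSucc) h0 h
      exact ⟨i.castSucc, hi⟩
    · exact ⟨Fin.last k, not_lt.1 h, hlast⟩

theorem Set.finite_and_ncard_le_of_forall_finset_card_le {α : Type*} {s : Set α} {k : ℕ}
    (h : ∀ t : Finset α, ↑t ⊆ s → t.card ≤ k) : s.Finite ∧ s.ncard ≤ k := by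
  have hs : s.Finite := by
    by_contra hinf
    obtain ⟨t, hts, htk⟩ := Set.Infinite.exists_subset_card_eq hinf (k + 1)
    have := h t hts
    omega
  refine ⟨hs, ?_⟩
  rw [ncard_eq_toFinset_card s hs]
  exact h _ (by simp)

section PeriodicOrbits

variable {α : Type*} {f : α → α} {p : ℕ} {x : α}

theorem Function.IsPeriodicPt.finite_range_iterate (hx : IsPeriodicPt f p x) (hp : 0 < p) :
    (range fun n => f^[n] x).Finite := by
  refine (finite_range fun i : Fin p => f^[i] x).subset ?_
  rintro _ ⟨n, rfl⟩
  exact ⟨⟨n % p, Nat.mod_lt n hp⟩, hx.iterate_mod_apply n⟩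

theorem Function.IsPeriodicPt.range_iterate_eq_of_mem (hx : IsPeriodicPt f p x) (hp : 0 < p)
    {y : α} (hy : y ∈ range fun n => f^[n] x) :
    (range fun n => f^[n] y) = range fun n => f^[n] x := by
  obtain ⟨m, rfl⟩ := hy
  refine Subset.antisymm ?_ ?_
  · rintro _ ⟨n, rfl⟩
    exact ⟨n + m, iterate_add_apply f n m x⟩
  · rintro _ ⟨n, rfl⟩
    refine ⟨n + (p - 1) * m, ?_⟩
    have hnm : n + (p - 1) * m + m = n + p * m := by
      obtain ⟨q, rfl⟩ := Nat.exists_eq_add_of_lt hp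
      simp only [Nat.add_sub_cancel]; ring
    dsimp only
    rw [← iterate_add_apply, hnm, iterate_add_apply, (hx.mul_const m).eq]

def periodicOrbits (f : α → α) (s : Set α) : Set (Set α) :=
  {O | ∃ x, x ∈ s ∧ (∃ p, 1 ≤ p ∧ f^[p] x = x) ∧ O = range fun n => f^[n] x}

variable {s : Set α} {O O' : Set α}

theorem finite_of_mem_periodicOrbits (hO : O ∈ periodicOrbits f s) : O.Finite := by
  obtain ⟨x, -, ⟨p, hp, hx⟩, rfl⟩ := hO
  exact IsPeriodicPt.finite_range_iterate hx hp

theorem mapsTo_of_mem_periodicOrbits (hO : O ∈ periodicOrbits f s) : MapsTo f O O := by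
  obtain ⟨x, -, -, rfl⟩ := hO
  rintro _ ⟨n, rfl⟩
  exact ⟨n + 1, iterate_succ_apply' f n x⟩

theorem subset_of_mem_periodicOrbits (hs : MapsTo f s s) (hO : O ∈ periodicOrbits f s) :
    O ⊆ s := by
  obtain ⟨x, hx, -, rfl⟩ := hO
  rintro _ ⟨n, rfl⟩
  exact hs.iterate n hx

theorem eq_of_mem_periodicOrbits (hO : O ∈ periodicOrbits f s) (hO' : O' ∈ periodicOrbits f s)
    {u : α} (hu : u ∈ O) (hu' : u ∈ O') : O = O' := by
  obtain ⟨x, -, ⟨p, hp, hx⟩, rfl⟩ := hO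
  obtain ⟨x', -, ⟨p', hp', hx'⟩, rfl⟩ := hO'
  rw [← IsPeriodicPt.range_iterate_eq_of_mem hx hp hu,
    IsPeriodicPt.range_iterate_eq_of_mem hx' hp' hu']

end PeriodicOrbits

def IsPiecewiseAffineMod {k : ℕ} (lam : ℝ) (a : Fin (k + 1) → ℝ) (b : Fin k → ℝ)
    (f : ℝ → ℝ) : Prop :=
  ∀ i : Fin k, ∀ x ∈ Ico (a i.castSucc) (a i.succ), f x = Int.fract (lam * x + b i)

section PiecewiseAffine

variable {k : ℕ} {lam : ℝ} {a : Fin (k + 1) → ℝ} {b : Fin k → ℝ} {f : ℝ → ℝ}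

theorem IsPiecewiseAffineMod.mapsTo_Ico (hf : IsPiecewiseAffineMod lam a b f) (ha0 : a 0 = 0)
    (hak : a (Fin.last k) = 1) : MapsTo f (Ico 0 1) (Ico 0 1) := by
  intro x hx
  obtain ⟨i, hi⟩ := Fin.exists_castSucc_le_lt a (ha0 ▸ hx.1) (hak ▸ hx.2)
  rw [hf i x hi]
  exact ⟨Int.fract_nonneg _, Int.fract_lt_one _⟩

/-- If no breakpoint lies on the arc `(u, v]`, then `u < v` lie in the same piece, where `f`
multiplies arc lengths by `lam`. -/
theorem IsPiecewiseAffineMod.arcDist_apply (hf : IsPiecewiseAffineMod lam a b f)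
    (hlam0 : 0 < lam) (hlam1 : lam < 1) (ha0 : a 0 = 0) (hak : a (Fin.last k) = 1)
    {u v : ℝ} (hu : u ∈ Ico (0 : ℝ) 1) (hv : v ∈ Ico (0 : ℝ) 1)
    (hgood : ∀ j : Fin k, arcDist u v < arcDist u (a j.castSucc)) :
    arcDist (f u) (f v) = lam * arcDist u v := by
  obtain ⟨i, hi⟩ := Fin.exists_castSucc_le_lt a (ha0 ▸ hu.1) (hak ▸ hu.2)
  have huv : u < v := by
    by_contra! hvu
    have h0 := hgood ⟨0, i.pos⟩
    rw [show a (Fin.castSucc ⟨0, i.pos⟩) = 0 from ha0,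
      arcDist_of_le hvu (by linarith [hu.2, hv.1]), arcDist_of_le hu.1 (by linarith [hu.2])] at h0
    linarith [hv.1]
  have hvi : v < a i.succ := by
    by_contra! hv'
    have hlast : i.succ ≠ Fin.last k := fun h => by linarith [hv.2, hak ▸ h ▸ hv']
    obtain ⟨j, hj⟩ := Fin.exists_castSucc_eq.2 hlast
    have h1 := hgood j
    rw [hj, arcDist_of_lt huv (by linarith [hu.1, hv.2]),
      arcDist_of_lt hi.2 (by linarith [hu.1, hv.2])] at h1
    linarith
  rw [hf i u hi, hf i v ⟨hi.1.trans huv.le, hvi⟩, arcDist_fract_fract,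
    arcDist_of_lt huv (by linarith [hu.1, hv.2]),
    arcDist_of_lt (by nlinarith) (by nlinarith [hu.1, hv.2])]
  ring

variable {S : Finset ℝ}

theorem IsPiecewiseAffineMod.gap_apply_le (hf : IsPiecewiseAffineMod lam a b f)
    (hlam0 : 0 < lam) (hlam1 : lam < 1) (ha0 : a 0 = 0) (hak : a (Fin.last k) = 1)
    (hSI : ↑S ⊆ Ico (0 : ℝ) 1) (hfS : MapsTo f S S) {u : ℝ} (hu : u ∈ S)
    (hgood : ∀ j : Fin k, gap S u < arcDist u (a j.castSucc)) :
    gap S (f u) ≤ lam * gap S u := by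
  obtain ⟨v, hv, hvu⟩ := exists_arcDist_eq_gap hu
  calc gap S (f u) ≤ arcDist (f u) (f v) := gap_le_arcDist _ (hfS hv)
    _ = lam * gap S u := by
      rw [hf.arcDist_apply hlam0 hlam1 ha0 hak (hSI hu) (hSI hv) (hvu ▸ hgood), hvu]

/-- Gaps cannot shrink by the factor `lam` all along a cycle, so some point of every periodic
orbit has a breakpoint on the arc to its successor in `S`. -/
theorem IsPiecewiseAffineMod.exists_iterate_arcDist_le_gap
    (hf : IsPiecewiseAffineMod lam a b f)
    (hlam0 : 0 < lam) (hlam1 : lam < 1) (ha0 : a 0 = 0) (hak : a (Fin.last k) = 1)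
    (hSI : ↑S ⊆ Ico (0 : ℝ) 1) (hfS : MapsTo f S S) {p : ℕ} {x : ℝ}
    (hx : IsPeriodicPt f p x) (hp : 0 < p) (hxS : x ∈ S) :
    ∃ n, ∃ j : Fin k, arcDist (f^[n] x) (a j.castSucc) ≤ gap S (f^[n] x) := by
  by_contra! hgood
  have hcontract : ∀ n, gap S (f^[n] x) ≤ lam ^ n * gap S x := by
    intro n
    induction n with
    | zero => simp
    | succ n ih =>
      rw [iterate_succ_apply']
      calc gap S (f (f^[n] x)) ≤ lam * gap S (f^[n] x) :=
            hf.gap_apply_le hlam0 hlam1 ha0 hak hSI hfS (hfS.iterate n hxS) (hgood n)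
        _ ≤ lam * (lam ^ n * gap S x) := by gcongr
        _ = lam ^ (n + 1) * gap S x := by ring
  have hp' := hcontract p
  rw [hx.eq] at hp'
  have := pow_lt_one₀ hlam0.le hlam1 hp.ne'
  nlinarith [gap_pos S x]

theorem IsPiecewiseAffineMod.card_le_of_subset_periodicOrbits
    (hf : IsPiecewiseAffineMod lam a b f)
    (hlam0 : 0 < lam) (hlam1 : lam < 1) (ha0 : a 0 = 0) (hak : a (Fin.last k) = 1)
    {T : Finset (Set ℝ)} (hT : ↑T ⊆ periodicOrbits f (Ico 0 1)) : T.card ≤ k := by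
  have hfin : (⋃₀ (T : Set (Set ℝ))).Finite :=
    T.finite_toSet.sUnion fun O hO => finite_of_mem_periodicOrbits (hT hO)
  set S := hfin.toFinset
  have hSI : ↑S ⊆ Ico (0 : ℝ) 1 := by
    simpa [S] using fun O hO => subset_of_mem_periodicOrbits (hf.mapsTo_Ico ha0 hak) (hT hO)
  have hfS : MapsTo f S S := by
    simp only [S, Set.Finite.coe_toFinset]
    rintro u ⟨O, hO, hu⟩
    exact ⟨O, hO, mapsTo_of_mem_periodicOrbits (hT hO) hu⟩
  have hbad : ∀ O ∈ T, ∃ j : Fin k, ∃ u ∈ O, arcDist u (a j.castSucc) ≤ gap S u := by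
    intro O hO
    obtain ⟨x, -, ⟨p, hp, hx⟩, rfl⟩ := hT hO
    obtain ⟨n, j, hj⟩ := hf.exists_iterate_arcDist_le_gap hlam0 hlam1 ha0 hak hSI hfS hx hp
      (by simpa [S] using ⟨_, hO, 0, rfl⟩)
    exact ⟨j, _, ⟨n, rfl⟩, hj⟩
  choose j u hu hj using fun O : T => hbad O O.2
  have huS : ∀ O : T, u O ∈ S := fun O => by simpa [S] using ⟨O, O.2, hu O⟩
  have hinj : Injective j := by
    intro O O' hjO
    have hu' : u O = u O' := eq_of_arcDist_le_of_arcDist_le (hSI (huS O)) (hSI (huS O'))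
      ((hj O).trans (gap_le_arcDist _ (huS O')))
      (hjO ▸ (hj O').trans (gap_le_arcDist _ (huS O)))
    exact Subtype.ext (eq_of_mem_periodicOrbits (hT O.2) (hT O'.2) (hu O) (hu' ▸ hu O'))
  simpa using Fintype.card_le_of_injective j hinj

end PiecewiseAffine

theorem stmt_6_general (k : ℕ) (lam : ℝ) (hlam0 : 0 < lam) (hlam1 : lam < 1)
    (a : Fin (k+1) → ℝ) (ha0 : a 0 = 0) (hak : a (Fin.last k) = 1)
    (b : Fin k → ℝ) (f : ℝ → ℝ)
    (hf : ∀ i : Fin k, ∀ x ∈ Set.Ico (a i.castSucc) (a i.succ),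
      f x = Int.fract (lam * x + b i)) :
    {O : Set ℝ | ∃ x, x ∈ Set.Ico (0:ℝ) 1 ∧ (∃ p, 1 ≤ p ∧ f^[p] x = x) ∧
        O = Set.range fun n => f^[n] x}.Finite ∧
    {O : Set ℝ | ∃ x, x ∈ Set.Ico (0:ℝ) 1 ∧ (∃ p, 1 ≤ p ∧ f^[p] x = x) ∧
        O = Set.range fun n => f^[n] x}.ncard ≤ k :=
  Set.finite_and_ncard_le_of_forall_finset_card_le fun _ hT =>
    IsPiecewiseAffineMod.card_le_of_subset_periodicOrbits hf hlam0 hlam1 ha0 hak hT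

/-- A piecewise λ-affine map `f(x) = λx + bᵢ (mod 1)` on `[a_{i-1}, a_i)`,
with breakpoints `0 = a₀ < a₁ < ... < a_k = 1` and `0 < λ < 1`, has at most `k`
periodic orbits. -/
theorem stmt_6 (k : ℕ) (hk : 1 ≤ k) (lam : ℝ) (hlam0 : 0 < lam) (hlam1 : lam < 1)
    (a : Fin (k+1) → ℝ) (ha : StrictMono a) (ha0 : a 0 = 0) (hak : a (Fin.last k) = 1)
    (b : Fin k → ℝ) (f : ℝ → ℝ)
    (hf : ∀ i : Fin k, ∀ x ∈ Set.Ico (a i.castSucc) (a i.succ),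
      f x = Int.fract (lam * x + b i)) :
    {O : Set ℝ | ∃ x, x ∈ Set.Ico (0:ℝ) 1 ∧ (∃ p, 1 ≤ p ∧ f^[p] x = x) ∧
        O = Set.range fun n => f^[n] x}.Finite ∧
    {O : Set ℝ | ∃ x, x ∈ Set.Ico (0:ℝ) 1 ∧ (∃ p, 1 ≤ p ∧ f^[p] x = x) ∧
        O = Set.range fun n => f^[n] x}.ncard ≤ k :=
  stmt_6_general k lam hlam0 hlam1 a ha0 hak b f hf
end

section
/- Let f : [0,1) → [0,1) be a piecewise increasing contraction with singular set S. If the set Q = ⋃_{n≥0} f^{-n}(S) is finite, then the collection of connected components of [0,1)\Q is a finite collection {J₁,...,J_m} of pairwise disjoint intervals such that [0,1)\⋃J_i is finite and for each ℓ there exists τ(ℓ) with f(J_ℓ) ⊆ J_{τ(ℓ)} (an invariant quasi-partition). -/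
/-- If `Q = ⋃_{n≥0} f^{-n}(S)` is finite, then the connected components of
`[0,1) \ Q` form an invariant quasi-partition: finitely many pairwise disjoint
intervals covering all of `[0,1)` but finitely many points, each mapped by `f` into
another component. -/
theorem stmt_7 (f : ℝ → ℝ) (S : Set ℝ) (lam : ℝ)
    (hlam0 : 0 < lam) (hlam1 : lam < 1)
    (hSfin : S.Finite) (hS0 : (0:ℝ) ∈ S) (hSsub : S ⊆ Set.Ico 0 1)
    (hmap : Set.MapsTo f (Set.Ico 0 1) (Set.Ico 0 1))
    (hrc : ∀ x ∈ Set.Ico (0:ℝ) 1, ContinuousWithinAt f (Set.Ici x) x)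
    (hpiece : ∀ x ∈ Set.Ico (0:ℝ) 1, ∀ y ∈ Set.Ico (0:ℝ) 1, x < y →
      (∀ s ∈ S, s ∉ Set.Ioc x y) → f x < f y ∧ f y - f x ≤ lam * (y - x))
    (Q : Set ℝ) (hQ : Q = {x | x ∈ Set.Ico (0:ℝ) 1 ∧ ∃ n : ℕ, f^[n] x ∈ S})
    (hQfin : Q.Finite) :
    {C : Set ℝ | ∃ x ∈ Set.Ico (0:ℝ) 1 \ Q,
        C = connectedComponentIn (Set.Ico (0:ℝ) 1 \ Q) x}.Finite ∧
    (∀ C ∈ {C : Set ℝ | ∃ x ∈ Set.Ico (0:ℝ) 1 \ Q,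
        C = connectedComponentIn (Set.Ico (0:ℝ) 1 \ Q) x}, C.OrdConnected) ∧
    (∀ C ∈ {C : Set ℝ | ∃ x ∈ Set.Ico (0:ℝ) 1 \ Q,
        C = connectedComponentIn (Set.Ico (0:ℝ) 1 \ Q) x},
     ∀ C' ∈ {C : Set ℝ | ∃ x ∈ Set.Ico (0:ℝ) 1 \ Q,
        C = connectedComponentIn (Set.Ico (0:ℝ) 1 \ Q) x},
      C ≠ C' → Disjoint C C') ∧
    (Set.Ico (0:ℝ) 1 \ ⋃₀ {C : Set ℝ | ∃ x ∈ Set.Ico (0:ℝ) 1 \ Q,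
        C = connectedComponentIn (Set.Ico (0:ℝ) 1 \ Q) x}).Finite ∧
    (∀ C ∈ {C : Set ℝ | ∃ x ∈ Set.Ico (0:ℝ) 1 \ Q,
        C = connectedComponentIn (Set.Ico (0:ℝ) 1 \ Q) x},
     ∃ C' ∈ {C : Set ℝ | ∃ x ∈ Set.Ico (0:ℝ) 1 \ Q,
        C = connectedComponentIn (Set.Ico (0:ℝ) 1 \ Q) x},
      f '' C ⊆ C') := by
  have hSQ : S ⊆ Q := by
    intro s hs; rw [hQ]; exact ⟨hSsub hs, 0, by simpa using hs⟩
  have h0Q : (0:ℝ) ∈ Q := hSQ hS0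
  set U : Set ℝ := Set.Ico 0 1 \ Q with hUdef
  have hUopen : IsOpen U := by
    have hU' : U = Set.Ioo 0 1 ∩ Qᶜ := by
      ext x
      simp only [hUdef, Set.mem_diff, Set.mem_Ico, Set.mem_Ioo, Set.mem_inter_iff,
        Set.mem_compl_iff]
      constructor
      · rintro ⟨⟨h0, h1⟩, hq⟩
        refine ⟨⟨lt_of_le_of_ne h0 ?_, h1⟩, hq⟩
        intro h; exact hq (h ▸ h0Q)
      · rintro ⟨⟨h0, h1⟩, hq⟩; exact ⟨⟨h0.le, h1⟩, hq⟩
    rw [hU']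
    exact isOpen_Ioo.inter hQfin.isClosed.isOpen_compl
  -- basic facts about a component
  have hkey : ∀ C ∈ {C : Set ℝ | ∃ x ∈ U, C = connectedComponentIn U x},
      C.Nonempty ∧ C ⊆ U ∧ C.OrdConnected ∧ sInf C ∈ Q ∧ ∀ y ∈ C, sInf C < y := by
    rintro C ⟨x, hxU, rfl⟩
    set C := connectedComponentIn U x with hC
    have hxC : x ∈ C := mem_connectedComponentIn hxU
    have hCne : C.Nonempty := ⟨x, hxC⟩
    have hCU : C ⊆ U := connectedComponentIn_subset U x
    have hCpre : IsPreconnected C := isPreconnected_connectedComponentIn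
    have hCopen : IsOpen C := hUopen.connectedComponentIn
    have hbdd : BddBelow C := ⟨0, fun y hy => ((hCU hy).1).1⟩
    set a := sInf C with ha
    have hanotC : a ∉ C := by
      intro haC
      obtain ⟨ε, hε, hball⟩ := Metric.isOpen_iff.mp hCopen a haC
      have hmem : a - ε/2 ∈ C := by
        apply hball
        rw [Metric.mem_ball, Real.dist_eq]
        rw [show a - ε/2 - a = -(ε/2) by ring, abs_neg, abs_of_nonneg (by linarith)]
        linarith
      have := csInf_le hbdd hmem
      simp only [← ha] at this
      linarith
    have halt : ∀ y ∈ C, a < y := fun y hy =>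
      lt_of_le_of_ne (csInf_le hbdd hy) (fun h => hanotC (h ▸ hy))
    have ha0 : 0 ≤ a := le_csInf hCne fun y hy => ((hCU hy).1).1
    have ha1 : a < 1 := lt_of_le_of_lt (csInf_le hbdd hxC) hxU.1.2
    have haQ : a ∈ Q := by
      by_contra haQ
      have haU : a ∈ U := ⟨⟨ha0, ha1⟩, haQ⟩
      obtain ⟨ε, hε, hball⟩ := Metric.isOpen_iff.mp hUopen a haU
      obtain ⟨y, hyC, hylt⟩ := exists_lt_of_csInf_lt hCne (show sInf C < a + ε by
        rw [← ha]; linarith)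
      have hyball : y ∈ Metric.ball a ε := by
        rw [Metric.mem_ball, Real.dist_eq, abs_of_nonneg (by linarith [halt y hyC])]
        linarith
      have hTpre : IsPreconnected (C ∪ Metric.ball a ε) :=
        IsPreconnected.union y hyC hyball hCpre (convex_ball a ε).isPreconnected
      have hTsub : C ∪ Metric.ball a ε ⊆ U := Set.union_subset hCU hball
      have hTC : C ∪ Metric.ball a ε ⊆ C :=
        hTpre.subset_connectedComponentIn (Or.inl hxC) hTsub
      exact hanotC (hTC (Or.inr (Metric.mem_ball_self hε)))
    exact ⟨hCne, hCU, hCpre.ordConnected, haQ, halt⟩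
  refine ⟨?_, ?_, ?_, ?_, ?_⟩
  · -- finiteness
    apply Set.Finite.of_finite_image (f := fun C => sInf C)
    · apply hQfin.subset
      rintro _ ⟨C, hC, rfl⟩
      exact (hkey C hC).2.2.2.1
    · intro C1 h1 C2 h2 heq
      obtain ⟨hne1, hsub1, hord1, _, hlt1⟩ := hkey C1 h1
      obtain ⟨hne2, hsub2, hord2, _, hlt2⟩ := hkey C2 h2
      simp only at heq
      obtain ⟨y1, hy1⟩ := hne1
      obtain ⟨y2, hy2⟩ := hne2
      have hm : sInf C1 < min y1 y2 := lt_min (hlt1 y1 hy1) (heq ▸ hlt2 y2 hy2)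
      obtain ⟨z1, hz1, hz1lt⟩ := exists_lt_of_csInf_lt ⟨y1, hy1⟩ hm
      obtain ⟨z2, hz2, hz2lt⟩ := exists_lt_of_csInf_lt ⟨y2, hy2⟩ (show sInf C2 < z1 by
        rw [← heq]; exact hlt1 z1 hz1)
      have hz1C2 : z1 ∈ C2 :=
        hord2.out hz2 hy2 ⟨hz2lt.le, (hz1lt.trans_le (min_le_right y1 y2)).le⟩
      obtain ⟨x1, hx1, rfl⟩ := h1
      obtain ⟨x2, hx2, rfl⟩ := h2
      exact (connectedComponentIn_eq hz1).trans (connectedComponentIn_eq hz1C2).symm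
  · -- ord connected
    intro C hC
    exact (hkey C hC).2.2.1
  · -- pairwise disjoint
    rintro C hC C' hC' hne
    by_contra hdis
    obtain ⟨z, hz, hz'⟩ := Set.not_disjoint_iff.mp hdis
    obtain ⟨x, hx, rfl⟩ := hC
    obtain ⟨x', hx', rfl⟩ := hC'
    exact hne ((connectedComponentIn_eq hz).trans (connectedComponentIn_eq hz').symm)
  · -- covers all but finitely many points
    apply hQfin.subset
    intro x hx
    by_contra hxQ
    exact hx.2 ⟨connectedComponentIn U x, ⟨x, ⟨hx.1, hxQ⟩, rfl⟩,
      mem_connectedComponentIn ⟨hx.1, hxQ⟩⟩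
  · -- invariance
    have hfU : Set.MapsTo f U U := by
      intro x hx
      refine ⟨hmap hx.1, ?_⟩
      intro hfx
      rw [hQ] at hfx
      obtain ⟨_, n, hn⟩ := hfx
      apply hx.2
      rw [hQ]
      exact ⟨hx.1, n + 1, by rw [Function.iterate_succ_apply]; exact hn⟩
    rintro C hC
    obtain ⟨hCne, hCU, hord, _, _⟩ := hkey C hC
    obtain ⟨x0, hx0U, rfl⟩ := hC
    have hx0C : x0 ∈ connectedComponentIn U x0 := mem_connectedComponentIn hx0U
    set C := connectedComponentIn U x0 with hCdef
    have hSdisj : ∀ s ∈ S, s ∉ C := fun s hs hsC => (hCU hsC).2 (hSQ hs)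
    have hdist : ∀ x ∈ C, ∀ y ∈ C, x < y → dist (f x) (f y) ≤ lam * dist x y := by
      intro x hx y hy h
      have hS' : ∀ s ∈ S, s ∉ Set.Ioc x y := fun s hs hmem =>
        hSdisj s hs (hord.out hx hy ⟨hmem.1.le, hmem.2⟩)
      obtain ⟨hmono, hle⟩ := hpiece x (hCU hx).1 y (hCU hy).1 h hS'
      rw [Real.dist_eq, Real.dist_eq, abs_of_nonpos (by linarith),
        abs_of_nonpos (by linarith)]
      linarith
    have hlip : LipschitzOnWith ⟨lam, hlam0.le⟩ f C := by
      apply LipschitzOnWith.of_dist_le_mul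
      intro x hx y hy
      rcases lt_trichotomy x y with h | h | h
      · exact hdist x hx y hy h
      · subst h; simp
      · rw [dist_comm, dist_comm x y]; exact hdist y hy x hx h
    have hpre : IsPreconnected (f '' C) :=
      isPreconnected_connectedComponentIn.image f hlip.continuousOn
    have hfx0 : f x0 ∈ U := hfU hx0U
    refine ⟨connectedComponentIn U (f x0), ⟨f x0, hfx0, rfl⟩, ?_⟩
    apply hpre.subset_connectedComponentIn ⟨x0, hx0C, rfl⟩
    rintro _ ⟨w, hw, rfl⟩
    exact hfU (hCU hw)
end

section
/- Define f : [0,1) → [0,1) by f(x) = x/2 + 1/4 for 0 ≤ x < 1/2 and f(x) = x/2 − 1/4 for 1/2 ≤ x < 1. Then for every x ∈ [0,1), ω(f,x) = {1/2}, the point 1/2 is not a periodic point of f (indeed f has no periodic point), and hence f is not asymptotically periodic. -/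
section aux

variable {f : ℝ → ℝ} (hf : ∀ x : ℝ, f x = if x < 1/2 then x/2 + 1/4 else x/2 - 1/4)

lemma aux_orbit (hf : ∀ x : ℝ, f x = if x < 1/2 then x/2 + 1/4 else x/2 - 1/4)
    {x : ℝ} (hx : x ∈ Set.Ico (0:ℝ) (1/2)) (n : ℕ) :
    f^[n] x ∈ Set.Ico (0:ℝ) (1/2) ∧ 1/2 - f^[n] x = (1/2 - x) * (1/2)^n := by
  induction n with
  | zero => simpa using hx
  | succ n ih =>
    obtain ⟨⟨h0, h1⟩, heq⟩ := ih
    rw [Function.iterate_succ_apply', hf, if_pos h1]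
    constructor
    · constructor <;> [positivity; linarith]
    · rw [pow_succ]
      linarith [heq]

lemma aux_tendsto (hf : ∀ x : ℝ, f x = if x < 1/2 then x/2 + 1/4 else x/2 - 1/4)
    {x : ℝ} (hx : x ∈ Set.Ico (0:ℝ) 1) :
    Filter.Tendsto (fun n => f^[n] x) Filter.atTop (nhds (1/2)) := by
  have half : ∀ y : ℝ, y ∈ Set.Ico (0:ℝ) (1/2) →
      Filter.Tendsto (fun n => f^[n] y) Filter.atTop (nhds (1/2)) := by
    intro y hy
    have h : ∀ n, f^[n] y = 1/2 - (1/2 - y) * (1/2)^n := by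
      intro n; have := (aux_orbit hf hy n).2; linarith
    simp only [h]
    have : Filter.Tendsto (fun n : ℕ => (1/2 - y) * (1/2:ℝ)^n) Filter.atTop (nhds 0) := by
      simpa using (tendsto_pow_atTop_nhds_zero_of_lt_one (by norm_num) (by norm_num : (1/2:ℝ) < 1)).const_mul (1/2 - y)
    simpa using (tendsto_const_nhds.sub this)
  obtain ⟨hx0, hx1⟩ := hx
  by_cases h : x < 1/2
  · exact half x ⟨hx0, h⟩
  · have hfx : f x ∈ Set.Ico (0:ℝ) (1/2) := by
      rw [hf, if_neg h]
      push_neg at h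
      constructor <;> simp <;> linarith
    have := half (f x) hfx
    have h2 : Filter.Tendsto (fun n => f^[n + 1] x) Filter.atTop (nhds (1/2)) := by
      simpa [Function.iterate_succ_apply] using this
    exact (Filter.tendsto_add_atTop_iff_nat 1).mp h2

end aux

/-- For `f(x) = x/2 + 1/4` on `[0,1/2)` and `f(x) = x/2 - 1/4` on
`[1/2,1)`, every ω-limit set equals `{1/2}`, `f` has no periodic point in `[0,1)`, and
hence `f` is not asymptotically periodic. -/
theorem stmt_10 (f : ℝ → ℝ)
    (hf : ∀ x : ℝ, f x = if x < 1/2 then x/2 + 1/4 else x/2 - 1/4) :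
    (∀ x ∈ Set.Ico (0:ℝ) 1, omegaSet f x = {(1/2 : ℝ)}) ∧
    (∀ x ∈ Set.Ico (0:ℝ) 1, ∀ p : ℕ, 1 ≤ p → f^[p] x ≠ x) ∧
    ¬ (∀ x ∈ Set.Ico (0:ℝ) 1, ∃ y ∈ Set.Ico (0:ℝ) 1,
        (∃ p, 1 ≤ p ∧ f^[p] y = y) ∧ omegaSet f x = Set.range fun n => f^[n] y) := by
  have homega : ∀ x ∈ Set.Ico (0:ℝ) 1, omegaSet f x = {(1/2 : ℝ)} := by
    intro x hx
    have ht := aux_tendsto hf hx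
    ext y
    simp only [omegaSet, Set.mem_setOf_eq, Set.mem_singleton_iff]
    constructor
    · intro h
      have hle : Filter.map (fun n => f^[n] x) Filter.atTop ≤ nhds (1/2) := ht
      have : Filter.NeBot (nhds y ⊓ nhds (1/2:ℝ)) :=
        h.clusterPt.mono hle
      exact eq_of_nhds_neBot this
    · rintro rfl
      exact ht.mapClusterPt
  have hper : ∀ x ∈ Set.Ico (0:ℝ) 1, ∀ p : ℕ, 1 ≤ p → f^[p] x ≠ x := by
    intro x hx p hp heq
    obtain ⟨hx0, hx1⟩ := hx
    by_cases h : x < 1/2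
    · have := (aux_orbit hf ⟨hx0, h⟩ p).2
      rw [heq] at this
      have hpow : (1/2:ℝ)^p < 1 := pow_lt_one₀ (by norm_num) (by norm_num) (by omega)
      nlinarith [this, hpow]
    · push_neg at h
      have hfx : f x ∈ Set.Ico (0:ℝ) (1/2) := by
        rw [hf, if_neg (not_lt.mpr h)]
        constructor <;> simp <;> linarith
      obtain ⟨q, rfl⟩ : ∃ q, p = q + 1 := ⟨p - 1, by omega⟩
      have := (aux_orbit hf hfx q).1.2
      rw [← Function.iterate_succ_apply, heq] at this
      linarith
  refine ⟨homega, hper, fun H => ?_⟩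
  obtain ⟨y, hy, ⟨p, hp, hpy⟩, -⟩ := H 0 (by norm_num)
  exact hper y hy p hp hpy
end

section
/- Fix 0 = a₀ < a₁ < ... < a_{k-1} < a_k = 1 and b₁,...,b_k ∈ ℝ with a_i − b_j ∉ ℤ for all i, j ∈ {1,...,k} (ℤ-independence). For λ ∈ (0,1), let f_λ(x) = λx + b_i mod 1 on [a_{i-1}, a_i). Then the set of λ ∈ (0,1) for which f_λ has a singular connection (i.e., some finite composition of the affine branch maps x ↦ λx + δ sends some a_i, 0 ≤ i ≤ k, to some a_j, 0 ≤ j ≤ k) is at most countable. -/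
/-- For ℤ-independent data `a`, `b` (i.e. `aᵢ - bⱼ ∉ ℤ` for
`i,j ∈ {1,…,k}`, with `a_k = 1`), the set of slopes `λ ∈ (0,1)` for which the
piecewise λ-affine map `f_λ` has a singular connection — some composition of branch
maps `x ↦ λx + δ`, `δ = bᵢ + p` with `p ∈ ℤ`, `|δ| ≤ 1`, sends a breakpoint `a_i` to a
breakpoint `a_j` — is at most countable. -/
theorem stmt_11 (k : ℕ) (hk : 1 ≤ k)
    (a : Fin (k+1) → ℝ) (ha : StrictMono a) (ha0 : a 0 = 0) (hak : a (Fin.last k) = 1)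
    (b : Fin k → ℝ)
    (hind : ∀ (i j : Fin k) (p : ℤ), a i.succ - b j ≠ (p : ℝ)) :
    {lam : ℝ | lam ∈ Set.Ioo (0:ℝ) 1 ∧ ∃ n : ℕ, 1 ≤ n ∧ ∃ d : Fin n → ℝ,
      (∀ t, (∃ i : Fin k, ∃ p : ℤ, d t = b i + p) ∧ |d t| ≤ 1) ∧
      ∃ i j : Fin (k+1),
        lam ^ n * a i + (∑ t : Fin n, lam ^ (t:ℕ) * d t) = a j}.Countable := by
  classical
  set ι := Σ m : ℕ, ((Fin (m+1) → Fin k × ℤ) × Fin (k+1) × Fin (k+1)) with hι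
  let P : ι → Polynomial ℝ := fun x =>
    Polynomial.C (a x.2.2.1) * Polynomial.X ^ (x.1+1)
      + (∑ t : Fin (x.1+1), Polynomial.C (b (x.2.1 t).1 + ((x.2.1 t).2 : ℝ))
          * Polynomial.X ^ (t:ℕ))
      - Polynomial.C (a x.2.2.2)
  have hPne : ∀ x : ι, P x ≠ 0 := by
    rintro ⟨m, c, i, j⟩ hP0
    have h0 := congrArg (fun q => Polynomial.coeff q 0) hP0
    simp [P, Polynomial.coeff_X_pow, Polynomial.finset_sum_coeff,
      Fin.sum_univ_succ] at h0
    have hj : a j = b (c 0).1 + (((c 0).2 : ℝ)) := by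
      linarith
    induction j using Fin.cases with
    | zero =>
        rw [ha0] at hj
        have hklt : k - 1 < k := by omega
        have hsucc : (⟨k-1, hklt⟩ : Fin k).succ = Fin.last k := by
          ext; simp; omega
        refine hind ⟨k-1, hklt⟩ (c 0).1 ((c 0).2 + 1) ?_
        rw [hsucc, hak]; push_cast; linarith
    | succ j' =>
        refine hind j' (c 0).1 (c 0).2 ?_
        rw [hj]; ring
  have hsub : {lam : ℝ | lam ∈ Set.Ioo (0:ℝ) 1 ∧ ∃ n : ℕ, 1 ≤ n ∧ ∃ d : Fin n → ℝ,
      (∀ t, (∃ i : Fin k, ∃ p : ℤ, d t = b i + p) ∧ |d t| ≤ 1) ∧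
      ∃ i j : Fin (k+1),
        lam ^ n * a i + (∑ t : Fin n, lam ^ (t:ℕ) * d t) = a j}
      ⊆ ⋃ x : ι, {lam : ℝ | (P x).IsRoot lam} := by
    rintro lam ⟨-, n, hn, d, hd, i, j, heq⟩
    obtain ⟨m, rfl⟩ := Nat.exists_eq_succ_of_ne_zero (by omega : n ≠ 0)
    choose ci cp hc using fun t => (hd t).1
    refine Set.mem_iUnion.2 ⟨⟨m, fun t => (ci t, cp t), i, j⟩, ?_⟩
    simp only [Set.mem_setOf_eq, Polynomial.IsRoot, P, Polynomial.eval_sub,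
      Polynomial.eval_add, Polynomial.eval_mul, Polynomial.eval_pow,
      Polynomial.eval_C, Polynomial.eval_X, Polynomial.eval_finset_sum]
    have h2 : ∀ t : Fin (m+1), b (ci t) + (cp t : ℝ) = d t := fun t => (hc t).symm
    simp only [h2]
    have hs : ∑ x : Fin (m+1), d x * lam ^ (x:ℕ) = ∑ t : Fin (m+1), lam ^ (t:ℕ) * d t :=
      Finset.sum_congr rfl fun t _ => mul_comm _ _
    rw [hs, ← heq]
    simp only [Nat.succ_eq_add_one]
    ring
  refine Set.Countable.mono hsub (Set.countable_iUnion fun x => ?_)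
  exact ((Polynomial.finite_setOf_isRoot (hPne x)).countable)
end

section
/- Let f : [0,1) → [0,1) be a piecewise λ-affine contraction (branches φ_j(x) = λx + δ_j, 0 < λ < 1) with breakpoints 0 = a₀ < a₁ < ... < a_{k-1}. Suppose there exist δ > 0 and n₀ ∈ ℕ such that |H_ω(λ) − a_i| ≥ δ for all 0 ≤ i < k, all n ≥ n₀, and every itinerary ω of order n, where H_ω(λ) = Σ_{j=0}^{n-1} λ^j δ_{i_{n-1-j}} for ω = (i₀,...,i_{n-1}). Then the set Q = ⋃_{n≥0} f^{-n}(S) is finite, where S is the singular set of f. -/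
/-!
Since `d` is constant between consecutive singular points, it takes finitely many values; as
`x ↦ λx + c` is injective, `f` is finite-to-one on `[0,1)` and every set `f⁻ⁿ(S)` is finite. It remains to see that
orbits meet `S` only at bounded times. If `fⁿ x = aᵢ`, then `|fⁿ x - λⁿ x - aᵢ| = λⁿ x < λⁿ`;
if `fⁿ x` is any other singular point, then `fⁿ⁺¹ x = 0 = a₀`. Once `λⁿ < δ`, both contradict the
separation hypothesis.
-/

open Set

section BackwardOrbit

variable {α : Type*} {I S : Set α} {f : α → α}

theorem finite_inter_preimage_iterate_s13 (hmap : MapsTo f I I)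
    (hfin : ∀ T : Set α, T.Finite → (I ∩ f ⁻¹' T).Finite) (hS : S.Finite) (n : ℕ) :
    (I ∩ f^[n] ⁻¹' S).Finite := by
  induction n with
  | zero => exact hS.subset inter_subset_right
  | succ n ih =>
    refine (hfin _ ih).subset ?_
    rintro x ⟨hx, hfx⟩
    exact ⟨hx, hmap hx, by rwa [mem_preimage, Function.iterate_succ_apply] at hfx⟩

theorem finite_setOf_exists_iterate_mem (hmap : MapsTo f I I)
    (hfin : ∀ T : Set α, T.Finite → (I ∩ f ⁻¹' T).Finite) (hS : S.Finite) {N : ℕ}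
    (havoid : ∀ x ∈ I, ∀ n, N ≤ n → f^[n] x ∉ S) :
    {x | x ∈ I ∧ ∃ n, f^[n] x ∈ S}.Finite := by
  refine ((finite_lt_nat N).biUnion fun n _ =>
    finite_inter_preimage_iterate_s13 hmap hfin hS n).subset ?_
  rintro x ⟨hx, n, hn⟩
  exact mem_biUnion (show n < N from not_le.1 fun h => havoid x hx n h hn) ⟨hx, hn⟩

end BackwardOrbit

theorem finite_inter_preimage_of_eq_affine {K : Type*} [Field K] {I T : Set K} {f d : K → K}
    {lam : K} (hlam : lam ≠ 0) (hd : (d '' I).Finite) (hf : ∀ x ∈ I, f x = lam * x + d x)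
    (hT : T.Finite) : (I ∩ f ⁻¹' T).Finite := by
  refine ((hT.prod hd).image fun p => (p.1 - p.2) / lam).subset ?_
  rintro x ⟨hx, hfx⟩
  refine ⟨(f x, d x), ⟨hfx, mem_image_of_mem d hx⟩, ?_⟩
  show (f x - d x) / lam = x
  rw [hf x hx, add_sub_cancel_right, mul_div_cancel_left₀ x hlam]

theorem image_Ico_subset_image_of_const_on_gaps {β : Type*} {S : Set ℝ} {d : ℝ → β}
    (hS : S.Finite) (hSsub : S ⊆ Ico 0 1) (h0 : 0 ∈ S)
    (hdpiece : ∀ x ∈ Ico (0:ℝ) 1, ∀ y ∈ Ico (0:ℝ) 1, x ≤ y →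
      (∀ s ∈ S, s ∉ Ioc x y) → d x = d y) :
    d '' Ico 0 1 ⊆ d '' S := by
  rintro _ ⟨x, hx, rfl⟩
  have hL : (S ∩ Iic x).Finite := hS.subset inter_subset_left
  have hmax : sSup (S ∩ Iic x) ∈ S ∩ Iic x := Nonempty.csSup_mem ⟨0, h0, hx.1⟩ hL
  refine ⟨_, hmax.1, hdpiece _ (hSsub hmax.1) x hx hmax.2 fun s hs hsx => ?_⟩
  exact not_le.2 hsx.1 (le_csSup hL.bddAbove ⟨hs, hsx.2⟩)

section Breakpoints

variable {k n : ℕ} {lam δ x : ℝ} {a : Fin (k+1) → ℝ} {f : ℝ → ℝ}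

theorem iterate_ne_breakpoint_of_sep (hlam0 : 0 < lam) (hx : x ∈ Ico (0:ℝ) 1)
    (hsmall : lam ^ n < δ) (i : Fin k) (hsep : δ ≤ |f^[n] x - lam ^ n * x - a i.castSucc|) :
    f^[n] x ≠ a i.castSucc := by
  intro h
  rw [h, sub_sub_cancel_left, abs_neg, abs_of_nonneg (mul_nonneg (pow_nonneg hlam0.le n) hx.1)] at hsep
  have : lam ^ n * x ≤ lam ^ n := mul_le_of_le_one_right (pow_nonneg hlam0.le n) hx.2.le
  linarith

theorem exists_iterate_eq_breakpoint {S : Set ℝ} (hk : 1 ≤ k) (ha0 : a 0 = 0)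
    (hak : a (Fin.last k) = 1) (hsing0 : ∀ s ∈ S, (∀ i : Fin (k+1), s ≠ a i) → f s = 0)
    (hlt : f^[n] x < 1) (hmem : f^[n] x ∈ S) :
    ∃ i : Fin k, f^[n] x = a i.castSucc ∨ f^[n+1] x = a i.castSucc := by
  by_cases h : ∃ i : Fin (k+1), f^[n] x = a i
  · obtain ⟨i, hi⟩ := h
    have hlast : i ≠ Fin.last k := by rintro rfl; exact hlt.ne (hi.trans hak)
    obtain ⟨j, rfl⟩ := Fin.exists_castSucc_eq.2 hlast
    exact ⟨j, .inl hi⟩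
  · push Not at h
    refine ⟨⟨0, hk⟩, .inr ?_⟩
    rw [Function.iterate_succ_apply', hsing0 _ hmem h, ← ha0]
    rfl

end Breakpoints

theorem stmt_13_general (k : ℕ) (hk : 1 ≤ k) (lam : ℝ) (hlam0 : 0 < lam) (hlam1 : lam < 1)
    (a : Fin (k+1) → ℝ) (ha0 : a 0 = 0) (hak : a (Fin.last k) = 1)
    (S : Set ℝ) (hSfin : S.Finite) (hSsub : S ⊆ Set.Ico 0 1)
    (hbreak : ∀ i : Fin k, a i.castSucc ∈ S)
    (f : ℝ → ℝ) (hmap : Set.MapsTo f (Set.Ico 0 1) (Set.Ico 0 1))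
    (d : ℝ → ℝ)
    (hdpiece : ∀ x ∈ Set.Ico (0:ℝ) 1, ∀ y ∈ Set.Ico (0:ℝ) 1, x ≤ y →
      (∀ s ∈ S, s ∉ Set.Ioc x y) → d x = d y)
    (hf : ∀ x ∈ Set.Ico (0:ℝ) 1, f x = lam * x + d x)
    (hsing0 : ∀ s ∈ S, (∀ i : Fin (k+1), s ≠ a i) → f s = 0)
    (δ : ℝ) (hδ : 0 < δ) (n₀ : ℕ)
    (hsep : ∀ n : ℕ, n₀ ≤ n → ∀ x ∈ Set.Ico (0:ℝ) 1, ∀ i : Fin k,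
      δ ≤ |f^[n] x - lam ^ n * x - a i.castSucc|) :
    {x | x ∈ Set.Ico (0:ℝ) 1 ∧ ∃ n : ℕ, f^[n] x ∈ S}.Finite := by
  have h0S : (0:ℝ) ∈ S := ha0 ▸ hbreak ⟨0, hk⟩
  have hd : (d '' Ico 0 1).Finite :=
    (hSfin.image d).subset (image_Ico_subset_image_of_const_on_gaps hSfin hSsub h0S hdpiece)
  obtain ⟨M, hM⟩ := exists_pow_lt_of_lt_one hδ hlam1
  have hsmall : ∀ n, M ≤ n → lam ^ n < δ := fun n hn =>
    (pow_le_pow_of_le_one hlam0.le hlam1.le hn).trans_lt hM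
  refine finite_setOf_exists_iterate_mem hmap
    (fun T hT => finite_inter_preimage_of_eq_affine hlam0.ne' hd hf hT) hSfin
    (N := max M n₀) fun x hx n hn hmem => ?_
  rw [max_le_iff] at hn
  obtain ⟨i, hi | hi⟩ :=
    exists_iterate_eq_breakpoint hk ha0 hak hsing0 (hmap.iterate n hx).2 hmem
  · exact iterate_ne_breakpoint_of_sep hlam0 hx (hsmall n hn.1) i (hsep n hn.2 x hx i) hi
  · exact iterate_ne_breakpoint_of_sep hlam0 hx (hsmall (n+1) (by omega)) i
      (hsep (n+1) (by omega) x hx i) hi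

/-- For a piecewise λ-affine contraction `f` of `[0,1)` (of the form
`f x = λx + d x` with `d` constant on the pieces of the finite singular set `S`,
`|d| ≤ 1`, breakpoints `a₀ = 0 < a₁ < ⋯ < a_{k-1}` among the singular points, and
every singular point that is not a breakpoint mapped to `0`): if there are `δ > 0` and
`n₀` with `|H_ω(λ) - aᵢ| = |f^[n] x - λⁿ x - aᵢ| ≥ δ` for all `n ≥ n₀`, all realized
itineraries (i.e. all `x ∈ [0,1)`) and all `0 ≤ i < k`, then `Q = ⋃_{n≥0} f^{-n}(S)`
is finite. -/
theorem stmt_13 (k : ℕ) (hk : 1 ≤ k) (lam : ℝ) (hlam0 : 0 < lam) (hlam1 : lam < 1)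
    (a : Fin (k+1) → ℝ) (ha : StrictMono a) (ha0 : a 0 = 0) (hak : a (Fin.last k) = 1)
    (S : Set ℝ) (hSfin : S.Finite) (hSsub : S ⊆ Set.Ico 0 1)
    (hbreak : ∀ i : Fin k, a i.castSucc ∈ S)
    (f : ℝ → ℝ) (hmap : Set.MapsTo f (Set.Ico 0 1) (Set.Ico 0 1))
    (d : ℝ → ℝ) (hd1 : ∀ x ∈ Set.Ico (0:ℝ) 1, |d x| ≤ 1)
    (hdpiece : ∀ x ∈ Set.Ico (0:ℝ) 1, ∀ y ∈ Set.Ico (0:ℝ) 1, x ≤ y →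
      (∀ s ∈ S, s ∉ Set.Ioc x y) → d x = d y)
    (hf : ∀ x ∈ Set.Ico (0:ℝ) 1, f x = lam * x + d x)
    (hsing0 : ∀ s ∈ S, (∀ i : Fin (k+1), s ≠ a i) → f s = 0)
    (δ : ℝ) (hδ : 0 < δ) (n₀ : ℕ)
    (hsep : ∀ n : ℕ, n₀ ≤ n → ∀ x ∈ Set.Ico (0:ℝ) 1, ∀ i : Fin k,
      δ ≤ |f^[n] x - lam ^ n * x - a i.castSucc|) :
    {x | x ∈ Set.Ico (0:ℝ) 1 ∧ ∃ n : ℕ, f^[n] x ∈ S}.Finite :=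
  stmt_13_general k hk lam hlam0 hlam1 a ha0 hak S hSfin hSsub hbreak f hmap d hdpiece hf hsing0 δ
    hδ n₀ hsep
end
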